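/- arXiv:2311.12231 — 7 statements merged into one kernel-verified Lean document; each statement's English description precedes it below -/
import Mathlib

section
/- Let V be an n-dimensional real vector space, X a k-dimensional linear subspace of V, and B₁, B₂ ⊂ V two convex sets with 0 in their interiors. Assume that B₁ and B₂ coincide near X, and that B₁ is contained in a k-cylinder C with base B₁ ∩ X. Then B₂ ⊂ C as well. -/
open Module Set Pointwise

/-- The Grassmannian of `k`-dimensional linear subspaces of `V`. -/
abbrev Gr (k : ℕ) (V : Type*) [AddCommGroup V] [Module ℝ V] :=
  {X : Submodule ℝ V // Module.finrank ℝ X = k}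

/-- The standard (quotient) topology on the Grassmannian, coinduced from the space of
linearly independent `k`-tuples of vectors. -/
noncomputable instance grTop (k : ℕ) (V : Type*) [AddCommGroup V] [Module ℝ V]
    [TopologicalSpace V] : TopologicalSpace (Gr k V) :=
  TopologicalSpace.coinduced
    (fun v : {v : Fin k → V // LinearIndependent ℝ v} =>
      (⟨Submodule.span ℝ (Set.range v.1), by
          rw [finrank_span_eq_card v.2, Fintype.card_fin]⟩ : Gr k V))
    inferInstance

/-- A convex body: a compact convex set with nonempty interior. -/
def IsConvexBody {V : Type*} [AddCommGroup V] [Module ℝ V] [TopologicalSpace V]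
    (B : Set V) : Prop :=
  IsCompact B ∧ Convex ℝ B ∧ (interior B).Nonempty

/-- `C` is a `k`-cylinder with base `K` lying in the `k`-dimensional subspace `X`:
`K` is a `k`-dimensional convex body in `X` and `C = K + Y` for some complement `Y` of `X`. -/
def IsCylinderWithBase {V : Type*} [AddCommGroup V] [Module ℝ V] [TopologicalSpace V]
    (k : ℕ) (C K : Set V) (X : Submodule ℝ V) : Prop :=
  Module.finrank ℝ X = k ∧ K ⊆ (X : Set V) ∧ IsCompact K ∧ Convex ℝ K ∧
    (interior ((↑) ⁻¹' K : Set X)).Nonempty ∧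
    ∃ Y : Submodule ℝ V, IsCompl X Y ∧ C = K + (Y : Set V)

/-- `C` is a `k`-cylinder. -/
def IsCylinder {V : Type*} [AddCommGroup V] [Module ℝ V] [TopologicalSpace V]
    (k : ℕ) (C : Set V) : Prop :=
  ∃ (K : Set V) (X : Submodule ℝ V), IsCylinderWithBase k C K X

/-- Two sets coincide near a subspace `X`. -/
def CoincideNear {V : Type*} [AddCommGroup V] [Module ℝ V] [TopologicalSpace V]
    (B₁ B₂ : Set V) (X : Submodule ℝ V) : Prop :=
  ∃ U : Set V, IsOpen U ∧ (X : Set V) ⊆ U ∧ B₁ ∩ U = B₂ ∩ U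

/-- `B` is locally cylindrical near `X`. -/
def IsLocallyCylindricalNear {V : Type*} [AddCommGroup V] [Module ℝ V] [TopologicalSpace V]
    (k : ℕ) (B : Set V) (X : Submodule ℝ V) : Prop :=
  ∃ C : Set V, IsCylinder k C ∧ CoincideNear B C X

/-- A Minkowski seminorm: nonnegative, positively 1-homogeneous and subadditive. -/
def IsMinkowskiSeminorm {V : Type*} [AddCommGroup V] [Module ℝ V] (Φ : V → ℝ) : Prop :=
  (∀ v, 0 ≤ Φ v) ∧ (∀ (c : ℝ) (v : V), 0 ≤ c → Φ (c • v) = c * Φ v) ∧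
    ∀ v w, Φ (v + w) ≤ Φ v + Φ w

/-- A Minkowski norm: a Minkowski seminorm positive outside the origin. -/
def IsMinkowskiNorm {V : Type*} [AddCommGroup V] [Module ℝ V] (Φ : V → ℝ) : Prop :=
  IsMinkowskiSeminorm Φ ∧ ∀ v : V, v ≠ 0 → 0 < Φ v

/-- `X` is `Φ`-contracting with contracting direction `Y`. -/
def IsContractingWithDirection {V : Type*} [AddCommGroup V] [Module ℝ V]
    (Φ : V → ℝ) (X Y : Submodule ℝ V) : Prop :=
  ∃ h : IsCompl X Y, ∀ v : V, Φ (X.linearProjOfIsCompl Y h v : V) ≤ Φ v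

/-- `X` is `Φ`-contracting: there is a linear projector of `V` onto `X`
that does not increase `Φ`. -/
def IsContracting {V : Type*} [AddCommGroup V] [Module ℝ V]
    (Φ : V → ℝ) (X : Submodule ℝ V) : Prop :=
  ∃ P : V →ₗ[ℝ] V, P ∘ₗ P = P ∧ LinearMap.range P = X ∧ ∀ v, Φ (P v) ≤ Φ v

/-- `K` is a 0-centered ellipsoid in the subspace `X`: the unit ball of an
inner product norm on `X`. -/
def IsEllipsoidIn {V : Type*} [AddCommGroup V] [Module ℝ V]
    (X : Submodule ℝ V) (K : Set V) : Prop :=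
  ∃ Q : QuadraticForm ℝ X, Q.PosDef ∧ K = (↑) '' {x : X | Q x ≤ 1}

/-!
Let `P` be the projection onto `X` along the generatrix `Y` and `K = B₁ ∩ X`, so that `C = K + Y`
is the set of `v` with `P v ∈ K`. Fix `b ∈ B₂` and an open `U ⊇ X` with `B₁ ∩ U = B₂ ∩ U`.
If `t • P b ∈ K` for some `t < 1`, that point lies in `B₂ ∩ U`, so by convexity of `B₂` a short
step from it towards `b` stays in `B₂ ∩ U ⊆ B₁ ⊆ C`; projecting the step gives `t' • P b ∈ K`
for some `t' ∈ (t, 1]`. As `K` is closed and contains `0`, continuous induction on `t ∈ [0, 1]`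
yields `P b ∈ K`, i.e. `b ∈ C`.
-/

section

open Filter Topology

variable {V : Type*} [AddCommGroup V] [Module ℝ V]

theorem Submodule.mem_add_iff_projection_mem {X Y : Submodule ℝ V} (hXY : IsCompl X Y)
    {K : Set V} (hKX : K ⊆ X) {v : V} :
    v ∈ K + (Y : Set V) ↔ X.projection Y hXY v ∈ K := by
  constructor
  · rintro ⟨x, hx, y, hy, rfl⟩
    rwa [map_add, projection_apply_of_mem_left hXY (hKX hx),
      projection_apply_of_mem_right hXY hy, add_zero]
  · intro hv
    exact ⟨_, hv, _, sub_projection_mem hXY v, add_sub_cancel _ _⟩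

variable [TopologicalSpace V] [ContinuousAdd V] [ContinuousSMul ℝ V]

theorem Convex.exists_add_smul_sub_mem_inter {s U : Set V} (hs : Convex ℝ s) (hU : IsOpen U)
    {p b : V} (hp : p ∈ s) (hpU : p ∈ U) (hb : b ∈ s) :
    ∃ δ ∈ Ioc (0 : ℝ) 1, p + δ • (b - p) ∈ s ∩ U := by
  have hcont : Tendsto (fun δ : ℝ => p + δ • (b - p)) (𝓝[>] 0) (𝓝 p) := by
    have : Continuous (fun δ : ℝ => p + δ • (b - p)) := by fun_prop
    simpa using (this.tendsto 0).mono_left nhdsWithin_le_nhds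
  obtain ⟨δ, hδU, hδ⟩ :=
    ((hcont.eventually (hU.mem_nhds hpU)).and (Ioo_mem_nhdsGT zero_lt_one)).exists
  exact ⟨δ, Ioo_subset_Ioc_self hδ, hs.add_smul_sub_mem hp hb (Ioo_subset_Icc_self hδ), hδU⟩

theorem CoincideNear.subset_inter_add {B₁ B₂ : Set V} {X Y : Submodule ℝ V}
    (hnear : CoincideNear B₁ B₂ X) (hXY : IsCompl X Y) (hB₂ : Convex ℝ B₂) (h0 : (0 : V) ∈ B₁)
    (hK : IsClosed (B₁ ∩ X)) (hB₁ : B₁ ⊆ B₁ ∩ X + Y) :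
    B₂ ⊆ B₁ ∩ X + Y := by
  obtain ⟨U, hU, hXU, hUeq⟩ := hnear
  have hmem (v : V) := X.mem_add_iff_projection_mem hXY (inter_subset_right (s := B₁)) (v := v)
  intro b hb
  set q := X.projection Y hXY b
  have hqX : q ∈ X := X.projection_apply_mem hXY b
  suffices (1 : ℝ) ∈ {t : ℝ | t • q ∈ B₁ ∩ X} by
    rw [hmem]; simpa only [mem_ofPred_eq, one_smul] using this
  refine IsClosed.mem_of_ge_of_forall_exists_gt ?_ (by simpa using h0) zero_le_one ?_
  · exact (hK.preimage (continuous_id.smul continuous_const)).inter isClosed_Icc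
  rintro t ⟨htK, -, ht1⟩
  have htB₂ : t • q ∈ B₂ ∩ U := hUeq ▸ ⟨htK.1, hXU htK.2⟩
  obtain ⟨δ, ⟨hδ0, hδ1⟩, hw⟩ := hB₂.exists_add_smul_sub_mem_inter hU htB₂.1 htB₂.2 hb
  have hwC := hB₁ (hUeq.symm ▸ hw).1
  have hPw : X.projection Y hXY (t • q + δ • (b - t • q)) = (t + δ * (1 - t)) • q := by
    simp only [map_add, map_smul, map_sub, X.projection_apply_of_mem_left hXY hqX]
    module
  refine ⟨t + δ * (1 - t), ?_, by nlinarith, by nlinarith⟩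
  rwa [hmem, hPw] at hwC

end

theorem locality_of_kakutani_condition_general
    {V : Type*} [NormedAddCommGroup V] [NormedSpace ℝ V]
    (k : ℕ)
    (X : Submodule ℝ V)
    (B₁ B₂ : Set V) (hB₂ : Convex ℝ B₂)
    (h0₁ : 0 ∈ interior B₁)
    (hnear : CoincideNear B₁ B₂ X)
    (C : Set V) (hC : IsCylinderWithBase k C (B₁ ∩ (X : Set V)) X)
    (hB₁C : B₁ ⊆ C) :
    B₂ ⊆ C := by
  obtain ⟨-, -, hKcomp, -, -, Y, hXY, rfl⟩ := hC
  exact hnear.subset_inter_add hXY hB₂ (interior_subset h0₁) hKcomp.isClosed hB₁C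

/-- **Locality of the Kakutani condition.** If convex sets `B₁, B₂` (with `0` interior)
coincide near `X` and `B₁` is contained in a `k`-cylinder `C` with base `B₁ ∩ X`,
then `B₂ ⊆ C` as well. -/
theorem locality_of_kakutani_condition
    {V : Type*} [NormedAddCommGroup V] [NormedSpace ℝ V] [FiniteDimensional ℝ V]
    (n k : ℕ) (hn : Module.finrank ℝ V = n)
    (X : Submodule ℝ V) (hX : Module.finrank ℝ X = k)
    (B₁ B₂ : Set V) (hB₁ : Convex ℝ B₁) (hB₂ : Convex ℝ B₂)
    (h0₁ : 0 ∈ interior B₁) (h0₂ : 0 ∈ interior B₂)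
    (hnear : CoincideNear B₁ B₂ X)
    (C : Set V) (hC : IsCylinderWithBase k C (B₁ ∩ (X : Set V)) X)
    (hB₁C : B₁ ⊆ C) :
    B₂ ⊆ C :=
  locality_of_kakutani_condition_general k X B₁ B₂ hB₂ h0₁ hnear C hC hB₁C
end

section
/- Let V be an n-dimensional real vector space, B ⊂ V a convex body with 0 in its interior, and X a k-dimensional linear subspace of V (1 ≤ k < n). Assume that at least one of the following holds: (1) B is locally cylindrical near X; (2) B coincides near X with B' = {v ∈ V : Q(v) ≤ 1} for some nonnegative definite quadratic form Q on V. Then B is contained in a k-cylinder with base B ∩ X. -/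
open Module Set Pointwise

/-!
`B` agrees on `X` with the comparison set `C` (the cylinder `K + Y`, resp. the sublevel set
`{Q ≤ 1}` with `Y` the `Q`-orthogonal complement of `X`). Since `B` is bounded, `C ∩ X` contains
no line, so `Y` meets `X` trivially and `V = X ⊕ Y`; moreover `C` contains the `X`-component of
each of its points. Convexity turns this local projection property into a global one: for
`x + y ∈ B`, the points `t • x ∈ B` can be pushed from `t = 0` up to `t = 1`, because the
segment from `t • x` towards `x + y` lies in `B` and starts near `X`, where `B` agrees with `C`.
Hence `B ⊆ (B ∩ X) + Y`.
-/

lemma add_mem_add_submodule {R M : Type*} [Semiring R] [AddCommMonoid M] [Module R M]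
    {K : Set M} {Y : Submodule R M} {z y : M} (hz : z ∈ K + (Y : Set M)) (hy : y ∈ Y) :
    z + y ∈ K + (Y : Set M) := by
  obtain ⟨a, ha, w, hw, rfl⟩ := hz
  exact ⟨a, ha, w + y, Y.add_mem hw hy, (add_assoc a w y).symm⟩

section Normed

open Topology

variable {V : Type*} [NormedAddCommGroup V] [NormedSpace ℝ V]

lemma eq_zero_of_forall_smul_mem {s : Set V} (hs : Bornology.IsBounded s) {v : V}
    (h : ∀ t : ℝ, t • v ∈ s) : v = 0 := by
  obtain ⟨R, hR⟩ := isBounded_iff_forall_norm_le.1 hs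
  by_contra hv
  have hv₀ : 0 < ‖v‖ := norm_pos_iff.2 hv
  have hfar := hR _ (h ((|R| + 1) / ‖v‖))
  rw [norm_smul, Real.norm_eq_abs, abs_of_pos (by positivity), div_mul_cancel₀ _ hv₀.ne']
    at hfar
  linarith [le_abs_self R]

namespace CoincideNear

variable {B C : Set V} {X Y : Submodule ℝ V}

lemma mem_iff (h : CoincideNear B C X) {v : V} (hv : v ∈ X) : v ∈ B ↔ v ∈ C := by
  obtain ⟨U, -, hXU, hBC⟩ := h
  simpa [hXU hv] using Set.ext_iff.1 hBC v

lemma eq_zero_of_forall_smul_mem (h : CoincideNear B C X) (hB : Bornology.IsBounded B) {v : V}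
    (hv : v ∈ X) (hC : ∀ t : ℝ, t • v ∈ C) : v = 0 :=
  _root_.eq_zero_of_forall_smul_mem hB fun t => (h.mem_iff (X.smul_mem t hv)).2 (hC t)

lemma mem_of_add_mem (h : CoincideNear B C X) (hBconv : Convex ℝ B) (hBclosed : IsClosed B)
    (h0 : (0 : V) ∈ B) (hC : ∀ x ∈ X, ∀ y ∈ Y, x + y ∈ C → x ∈ C)
    {x y : V} (hx : x ∈ X) (hy : y ∈ Y) (hxy : x + y ∈ B) : x ∈ B := by
  have ⟨U, hUo, hXU, hBC⟩ := h
  suffices (1 : ℝ) ∈ {t : ℝ | t • x ∈ B} by simpa using this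
  refine IsClosed.mem_of_ge_of_forall_exists_gt ?_ (by simpa using h0) zero_le_one ?_
  · exact (hBclosed.preimage (continuous_id.smul continuous_const)).inter isClosed_Icc
  rintro t ⟨htB, ht0, ht1⟩
  have hcont : Continuous fun l : ℝ => t • x + l • (x + y - t • x) := by fun_prop
  have hnear : ∀ᶠ l in 𝓝 (0 : ℝ), t • x + l • (x + y - t • x) ∈ U :=
    (hcont.tendsto' 0 (t • x) (by simp)).eventually_mem (hUo.mem_nhds (hXU (X.smul_mem t hx)))
  obtain ⟨l, hlU, hl0, hl1⟩ :=
    ((hnear.filter_mono nhdsWithin_le_nhds).and (Ioo_mem_nhdsGT one_pos)).exists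
  have hseg : t • x + l • (x + y - t • x) = (1 - l) • (t • x) + l • (x + y) := by module
  have hdecomp : t • x + l • (x + y - t • x) = (t + l * (1 - t)) • x + l • y := by module
  have hmemC : (t + l * (1 - t)) • x ∈ C := by
    refine hC _ (X.smul_mem _ hx) (l • y) (Y.smul_mem l hy) ?_
    rw [← hdecomp]
    refine (hBC ▸ ⟨?_, hlU⟩ : _ ∈ C ∩ U).1
    rw [hseg]
    exact hBconv htB hxy (by linarith) hl0.le (by ring)
  refine ⟨t + l * (1 - t), (h.mem_iff (X.smul_mem _ hx)).2 hmemC, ?_, ?_⟩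
  · nlinarith
  · nlinarith

lemma subset_inter_add_s4 (h : CoincideNear B C X) (hBconv : Convex ℝ B) (hBclosed : IsClosed B)
    (h0 : (0 : V) ∈ B) (hXY : IsCompl X Y)
    (hC : ∀ x ∈ X, ∀ y ∈ Y, x + y ∈ C → x ∈ C) :
    B ⊆ (B ∩ X) + (Y : Set V) := by
  intro b hb
  obtain ⟨x, hx, y, hy, rfl⟩ :=
    Submodule.mem_sup.1 (hXY.sup_eq_top ▸ Submodule.mem_top (x := b))
  exact mem_add.2 ⟨x, ⟨h.mem_of_add_mem hBconv hBclosed h0 hC hx hy hb, hx⟩, y, hy, rfl⟩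

end CoincideNear

end Normed

namespace QuadraticMap

variable {K V : Type*} [Field K] [AddCommGroup V] [Module K V]

lemma map_add_of_mem_orthogonal {Q : QuadraticForm K V} {X : Submodule K V} {x y : V}
    (hx : x ∈ X) (hy : y ∈ LinearMap.BilinForm.orthogonal Q.polarBilin X) :
    Q (x + y) = Q x + Q y := by
  rw [QuadraticMap.map_add Q x y, ← polarBilin_apply_apply, hy x hx, add_zero]

lemma isCompl_orthogonal_polarBilin [NeZero (2 : K)] [FiniteDimensional K V]
    {Q : QuadraticForm K V} {X : Submodule K V} (hQ : ∀ x ∈ X, Q x = 0 → x = 0) :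
    IsCompl X (LinearMap.BilinForm.orthogonal Q.polarBilin X) := by
  have hpolar (x : X) (hx : polar Q x x = 0) : x = 0 :=
    Subtype.ext (hQ _ x.2 (by simpa [polar_self, two_ne_zero] using hx))
  refine LinearMap.BilinForm.isCompl_orthogonal_of_restrict_nondegenerate
    (fun x y hxy => by rwa [polarBilin_apply_apply, polar_comm, ← polarBilin_apply_apply] at hxy)
    ⟨fun x hx => hpolar x (hx x), fun x hx => hpolar x (hx x)⟩

end QuadraticMap

section FiniteDimensional

variable {V : Type*} [NormedAddCommGroup V] [NormedSpace ℝ V] [FiniteDimensional ℝ V]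
  {B : Set V} {X : Submodule ℝ V} {k : ℕ}

lemma isCylinderWithBase_inter_add {Y : Submodule ℝ V} (hBcomp : IsCompact B)
    (hBconv : Convex ℝ B) (h0 : (0 : V) ∈ interior B) (hX : finrank ℝ X = k)
    (hXY : IsCompl X Y) : IsCylinderWithBase k ((B ∩ X) + (Y : Set V)) (B ∩ X) X :=
  ⟨hX, inter_subset_right, hBcomp.inter_right X.closed_of_finiteDimensional,
    hBconv.inter X.convex,
    ⟨0, interior_mono (fun (z : X) (hz : (z : V) ∈ B) => (⟨hz, z.2⟩ : (z : V) ∈ B ∩ X))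
      (preimage_interior_subset_interior_preimage continuous_subtype_val (by simpa using h0))⟩,
    Y, hXY, rfl⟩

lemma IsLocallyCylindricalNear.exists_isCompl (h : IsLocallyCylindricalNear k B X)
    (hB : Bornology.IsBounded B) (h0 : (0 : V) ∈ B) (hX : finrank ℝ X = k) :
    ∃ (C : Set V) (Y : Submodule ℝ V), CoincideNear B C X ∧ IsCompl X Y ∧
      ∀ x ∈ X, ∀ y ∈ Y, x + y ∈ C → x ∈ C := by
  obtain ⟨_, ⟨K, X₀, hX₀, -, -, -, -, Y, hX₀Y, rfl⟩, hBC⟩ := h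
  have hC0 : (0 : V) ∈ K + (Y : Set V) := (hBC.mem_iff X.zero_mem).1 h0
  have hXY : Disjoint X Y := Submodule.disjoint_def.2 fun v hvX hvY =>
    hBC.eq_zero_of_forall_smul_mem hB hvX fun t => by
      simpa using add_mem_add_submodule hC0 (Y.smul_mem t hvY)
  have hdim : finrank ℝ V ≤ finrank ℝ X + finrank ℝ Y := by
    rw [← Submodule.finrank_add_eq_of_isCompl hX₀Y, hX₀, hX]
  exact ⟨_, Y, hBC, (Submodule.isCompl_iff_disjoint X Y hdim).2 hXY,
    fun x _ y hy hxy => by simpa using add_mem_add_submodule hxy (Y.neg_mem hy)⟩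

lemma CoincideNear.exists_isCompl_of_quadraticForm {Q : QuadraticForm ℝ V} (hQ : ∀ v, 0 ≤ Q v)
    (h : CoincideNear B {v | Q v ≤ 1} X) (hB : Bornology.IsBounded B) :
    ∃ (C : Set V) (Y : Submodule ℝ V), CoincideNear B C X ∧ IsCompl X Y ∧
      ∀ x ∈ X, ∀ y ∈ Y, x + y ∈ C → x ∈ C := by
  refine ⟨_, _, h, QuadraticMap.isCompl_orthogonal_polarBilin (Q := Q) fun x hx hQx =>
    h.eq_zero_of_forall_smul_mem hB hx fun t => ?_, fun x hx y hy hxy => ?_⟩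
  · simp [QuadraticMap.map_smul, hQx]
  · have := QuadraticMap.map_add_of_mem_orthogonal hx hy
    simp only [mem_ofPred_eq] at hxy ⊢
    linarith [hQ y]

end FiniteDimensional

theorem local_kakutani_iff_converse_general
    {V : Type*} [NormedAddCommGroup V] [NormedSpace ℝ V] [FiniteDimensional ℝ V]
    (k : ℕ)
    (B : Set V) (hB : IsConvexBody B) (h0 : 0 ∈ interior B)
    (X : Submodule ℝ V) (hX : Module.finrank ℝ X = k)
    (h : IsLocallyCylindricalNear k B X ∨
      ∃ Q : QuadraticForm ℝ V, (∀ v, 0 ≤ Q v) ∧ CoincideNear B {v | Q v ≤ 1} X) :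
    ∃ C : Set V, IsCylinderWithBase k C (B ∩ (X : Set V)) X ∧ B ⊆ C := by
  obtain ⟨hBcomp, hBconv, -⟩ := hB
  obtain ⟨C, Y, hBC, hXY, hC⟩ : ∃ (C : Set V) (Y : Submodule ℝ V), CoincideNear B C X ∧
      IsCompl X Y ∧ ∀ x ∈ X, ∀ y ∈ Y, x + y ∈ C → x ∈ C := by
    rcases h with hcyl | ⟨Q, hQ, hBQ⟩
    · exact hcyl.exists_isCompl hBcomp.isBounded (interior_subset h0) hX
    · exact hBQ.exists_isCompl_of_quadraticForm hQ hBcomp.isBounded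
  exact ⟨_, isCylinderWithBase_inter_add hBcomp hBconv h0 hX hXY,
    hBC.subset_inter_add_s4 hBconv hBcomp.isClosed (interior_subset h0) hXY hC⟩

/-- **The local Kakutani condition is necessary.** If `B` is locally cylindrical near `X`,
or coincides near `X` with a sublevel set of a nonnegative definite quadratic form,
then `B` is contained in a `k`-cylinder with base `B ∩ X`. -/
theorem local_kakutani_iff_converse
    {V : Type*} [NormedAddCommGroup V] [NormedSpace ℝ V] [FiniteDimensional ℝ V]
    (n k : ℕ) (hn : Module.finrank ℝ V = n) (hk : 1 ≤ k) (hkn : k < n)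
    (B : Set V) (hB : IsConvexBody B) (h0 : 0 ∈ interior B)
    (X : Submodule ℝ V) (hX : Module.finrank ℝ X = k)
    (h : IsLocallyCylindricalNear k B X ∨
      ∃ Q : QuadraticForm ℝ V, (∀ v, 0 ≤ Q v) ∧ CoincideNear B {v | Q v ≤ 1} X) :
    ∃ C : Set V, IsCylinderWithBase k C (B ∩ (X : Set V)) X ∧ B ⊆ C :=
  local_kakutani_iff_converse_general k B hB h0 X hX h
end

section
/- Let Φ be a Minkowski norm on an n-dimensional real vector space V, 2 ≤ k < n an integer, and 𝒰 ⊂ Gr_k V a nonempty connected open set. Suppose that for every X ∈ 𝒰 the restriction Φ|_X is an inner product norm on X. Then there exists a unique quadratic form Q on V such that (Φ|_X)² = Q|_X for all X ∈ 𝒰; moreover, Q is nonnegative definite. -/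
open Module Set Pointwise

/-!
Put `f = Φ²`. Near a plane `X ∈ 𝒰` spanned by `e₀, e₁, …`, every point `z` close to `e₀` and
every direction `d` in the open cone generated by a ball around `e₁` lie in a common plane of `𝒰`,
so `f` is quadratic along the line `z + ℝ d`. Consequently second differences of `f` along steps
in the cone equal the polar form of `f` and do not depend on the base point; writing small steps
as differences of cone steps, `(u, v) ↦ Δ_v Δ_u f (e₀)` is bilinear near `0` and extends by scaling
to a bilinear form `B` on `V`. Homogeneity of `f` gives `f = B(x, x) / 2` near `e₀`, and as every
plane near `X` meets this neighbourhood, `f` is this quadratic form on all planes near `X`.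

Two quadratic forms agreeing on an open set coincide, so the local quadratic forms are locally
constant on the connected set `𝒰`. Nonnegativity comes from the convexity of `Φ`:
`Q(x + v) + Q(x - v) - 2 Q(x) = 2 Q(v)`, and the left side is nonnegative for `Q = Φ²` near `x`.
-/

open Filter Topology Metric QuadraticMap
open scoped fwdDiff

section QuadraticForm

variable {E : Type*} [AddCommGroup E] [Module ℝ E]

theorem QuadraticMap.map_add_smul (Q : QuadraticForm ℝ E) (x v : E) (t : ℝ) :
    Q (x + t • v) = Q x + t * polar Q x v + t ^ 2 * Q v := by
  rw [QuadraticMap.map_add Q x (t • v), polar_smul_right, QuadraticMap.map_smul, smul_eq_mul,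
    smul_eq_mul]
  ring

theorem QuadraticMap.map_add_smul_add_map_sub_smul (Q : QuadraticForm ℝ E) (x v : E) (t : ℝ) :
    Q (x + t • v) + Q (x - t • v) = 2 * Q x + 2 * t ^ 2 * Q v := by
  rw [sub_eq_add_neg, ← neg_smul, Q.map_add_smul, Q.map_add_smul]
  ring

variable [TopologicalSpace E] [ContinuousAdd E] [ContinuousSMul ℝ E]

theorem exists_ne_zero_add_smul_mem_sub_smul_mem {s : Set E} {x : E} (hs : s ∈ 𝓝 x) (v : E) :
    ∃ t : ℝ, t ≠ 0 ∧ x + t • v ∈ s ∧ x - t • v ∈ s := by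
  have hline : ∀ w : E, Tendsto (fun t : ℝ => x + t • w) (𝓝 0) (𝓝 x) := fun w => by
    have : Continuous fun t : ℝ => x + t • w := by fun_prop
    simpa using this.tendsto 0
  have hsmall : ∀ᶠ t in 𝓝[≠] (0 : ℝ), x + t • v ∈ s ∧ x - t • v ∈ s := by
    refine nhdsWithin_le_nhds (((hline v).eventually_mem hs).and ?_)
    simpa [sub_eq_add_neg, ← neg_smul] using (hline (-v)).eventually_mem hs
  obtain ⟨t, ht, ht0⟩ := (hsmall.and self_mem_nhdsWithin).exists
  exact ⟨t, ht0, ht⟩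

theorem QuadraticMap.eq_of_eventuallyEq {Q Q' : QuadraticForm ℝ E} {x : E}
    (h : ⇑Q =ᶠ[𝓝 x] ⇑Q') : Q = Q' := by
  ext v
  obtain ⟨t, ht, hadd, hsub⟩ := exists_ne_zero_add_smul_mem_sub_smul_mem h v
  have hx : Q x = Q' x := h.self_of_nhds
  have := Q.map_add_smul_add_map_sub_smul x v t
  rw [hadd, hsub, hx, Q'.map_add_smul_add_map_sub_smul] at this
  have ht2 : (0 : ℝ) < 2 * t ^ 2 := by positivity
  nlinarith

end QuadraticForm

section LocallyLinear

variable {E F : Type*} [NormedAddCommGroup E] [NormedSpace ℝ E] [AddCommGroup F] [Module ℝ F]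
  {r : ℝ}

theorem eventually_norm_smul_lt (hr : 0 < r) (x : E) : ∀ᶠ s : ℝ in 𝓝[>] 0, ‖s • x‖ < r := by
  have : Continuous fun s : ℝ => ‖s • x‖ := by fun_prop
  exact nhdsWithin_le_nhds (this.tendsto' 0 0 (by simp) |>.eventually (gt_mem_nhds hr))

theorem norm_smul_le_of_abs_le_one {a : ℝ} (ha : |a| ≤ 1) (x : E) : ‖a • x‖ ≤ ‖x‖ := by
  rw [norm_smul, Real.norm_eq_abs]
  exact mul_le_of_le_one_left (norm_nonneg x) ha

theorem LinearMap.eq_of_eqOn_ball {L L' : E →ₗ[ℝ] F} (hr : 0 < r)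
    (h : ∀ u, ‖u‖ < r → L u = L' u) : L = L' := by
  ext x
  obtain ⟨s, hsx, hs⟩ := ((eventually_norm_smul_lt hr x).and self_mem_nhdsWithin).exists
  have := h _ hsx
  rw [map_smul, map_smul] at this
  exact smul_right_injective F (ne_of_gt hs) this

variable {φ : E → F}

theorem inv_smul_map_smul_eq_of_ball
    (hsmul : ∀ (a : ℝ) u, |a| ≤ 1 → ‖u‖ < r → φ (a • u) = a • φ u) (x : E) {s t : ℝ}
    (hs : 0 < s) (ht : 0 < t) (hsx : ‖s • x‖ < r) (htx : ‖t • x‖ < r) :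
    s⁻¹ • φ (s • x) = t⁻¹ • φ (t • x) := by
  wlog hst : s ≤ t generalizing s t
  · exact (this ht hs htx hsx (le_of_not_ge hst)).symm
  have hst' : |s / t| ≤ 1 := by
    rw [abs_of_pos (by positivity), div_le_one ht]; exact hst
  rw [show s • x = (s / t) • t • x by rw [smul_smul, div_mul_cancel₀ _ ht.ne'],
    hsmul _ _ hst' htx, smul_smul]
  congr 1
  field_simp

theorem exists_linearMap_eqOn_ball (hr : 0 < r)
    (hadd : ∀ u v, ‖u‖ < r → ‖v‖ < r → ‖u + v‖ < r → φ (u + v) = φ u + φ v)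
    (hsmul : ∀ (a : ℝ) u, |a| ≤ 1 → ‖u‖ < r → φ (a • u) = a • φ u) :
    ∃ L : E →ₗ[ℝ] F, ∀ u, ‖u‖ < r → L u = φ u := by
  have hscale := inv_smul_map_smul_eq_of_ball hsmul
  choose c hc hc0 using fun x : E => ((eventually_norm_smul_lt hr x).and self_mem_nhdsWithin).exists
  refine ⟨{ toFun := fun x => (c x)⁻¹ • φ (c x • x), map_add' := ?_, map_smul' := ?_ }, ?_⟩
  · intro x y
    obtain ⟨s, ⟨⟨hsx, hsy⟩, hsxy⟩, hs⟩ := (((eventually_norm_smul_lt hr x).and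
      (eventually_norm_smul_lt hr y)).and (eventually_norm_smul_lt hr (x + y))).and
      self_mem_nhdsWithin |>.exists
    rw [hscale _ (hc0 _) hs (hc _) hsxy, hscale _ (hc0 _) hs (hc _) hsx,
      hscale _ (hc0 _) hs (hc _) hsy, smul_add, hadd _ _ hsx hsy (by rwa [← smul_add]), smul_add]
  · intro a x
    obtain ⟨s, ⟨hsx, hsax⟩, hs⟩ := ((eventually_norm_smul_lt hr x).and
      (eventually_norm_smul_lt hr (a • x))).and self_mem_nhdsWithin |>.exists
    simp only [RingHom.id_apply]
    rw [hscale _ (hc0 _) hs (hc _) hsax, hscale _ (hc0 _) hs (hc _) hsx, smul_comm a s⁻¹]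
    congr 1
    rcases le_or_gt |a| 1 with ha | ha
    · rw [smul_comm, hsmul _ _ ha hsx]
    · have ha0 : a ≠ 0 := by rintro rfl; norm_num at ha
      have := hsmul a⁻¹ _ (by rw [abs_inv]; exact inv_le_one_of_one_le₀ ha.le) hsax
      rw [smul_comm, inv_smul_smul₀ ha0] at this
      rw [this, smul_inv_smul₀ ha0]
  · intro u hu
    simp only [LinearMap.coe_mk, AddHom.coe_mk]
    rw [hscale _ (hc0 _) one_pos (hc _) (by rwa [one_smul]), inv_one, one_smul, one_smul]

theorem exists_bilinMap_eqOn_ball {β : E → E → F} (hr : 0 < r)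
    (hadd_left : ∀ u u' v, ‖u‖ < r → ‖u'‖ < r → ‖u + u'‖ < r → ‖v‖ < r →
      β (u + u') v = β u v + β u' v)
    (hsmul_left : ∀ (a : ℝ) u v, |a| ≤ 1 → ‖u‖ < r → ‖v‖ < r → β (a • u) v = a • β u v)
    (hadd_right : ∀ u v v', ‖u‖ < r → ‖v‖ < r → ‖v'‖ < r → ‖v + v'‖ < r →
      β u (v + v') = β u v + β u v')
    (hsmul_right : ∀ (a : ℝ) u v, |a| ≤ 1 → ‖u‖ < r → ‖v‖ < r → β u (a • v) = a • β u v) :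
    ∃ B : E →ₗ[ℝ] E →ₗ[ℝ] F, ∀ u v, ‖u‖ < r → ‖v‖ < r → B u v = β u v := by
  have hrow : ∀ u, ∃ L : E →ₗ[ℝ] F, ‖u‖ < r → ∀ v, ‖v‖ < r → L v = β u v := by
    intro u
    by_cases hu : ‖u‖ < r
    · obtain ⟨L, hL⟩ := exists_linearMap_eqOn_ball hr (φ := β u)
        (fun v v' => hadd_right u v v' hu) (fun a v ha => hsmul_right a u v ha hu)
      exact ⟨L, fun _ => hL⟩
    · exact ⟨0, fun h => absurd h hu⟩
  choose L hL using hrow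
  obtain ⟨B, hB⟩ := exists_linearMap_eqOn_ball hr (φ := L)
    (fun u u' hu hu' huu' => LinearMap.eq_of_eqOn_ball hr fun v hv => by
      rw [LinearMap.add_apply, hL _ huu' v hv, hL _ hu v hv, hL _ hu' v hv,
        hadd_left u u' v hu hu' huu' hv])
    (fun a u ha hu => LinearMap.eq_of_eqOn_ball hr fun v hv => by
      rw [LinearMap.smul_apply, hL _ ((norm_smul_le_of_abs_le_one ha u).trans_lt hu) v hv,
        hL _ hu v hv, hsmul_left a u v ha hu hv])
  exact ⟨B, fun u v hu hv => by rw [hB u hu, hL u hu v hv]⟩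

end LocallyLinear

section SecondDifferences

variable {V : Type*} [AddCommGroup V]

theorem fwdDiff_fwdDiff_comm (f : V → ℝ) (u v : V) : Δ_[v] (Δ_[u] f) = Δ_[u] (Δ_[v] f) := by
  funext y
  simp only [fwdDiff]
  abel_nf

theorem fwdDiff_fwdDiff_add_left (f : V → ℝ) (y u u' v : V) :
    Δ_[v] (Δ_[u + u'] f) y = Δ_[v] (Δ_[u] f) (y + u') + Δ_[v] (Δ_[u'] f) y := by
  simp only [fwdDiff]
  abel_nf

variable [Module ℝ V] {f : V → ℝ}

def IsQuadraticAlong (f : V → ℝ) (z d : V) : Prop :=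
  ∀ t : ℝ, f (z + t • d) = f z + t * polar f z d + t ^ 2 * f d

theorem IsQuadraticAlong.fwdDiff_fwdDiff_self {z d : V} (h : IsQuadraticAlong f z d) :
    Δ_[d] (Δ_[d] f) z = 2 * f d := by
  have h1 := h 1
  have h2 := h 2
  rw [one_smul] at h1
  rw [two_smul, ← add_assoc] at h2
  simp only [fwdDiff]
  linarith

/-- Since `Δ_[d] (Δ_[d] f) = 2 f d` along each of the three lines, the mixed second difference
does not depend on the base point. -/
theorem fwdDiff_fwdDiff_eq_polar {w b c : V} (hbc : IsQuadraticAlong f w (b + c))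
    (hb : IsQuadraticAlong f (w + c + c) b) (hc : IsQuadraticAlong f w c) :
    Δ_[c] (Δ_[b] f) (w + c) = polar f b c := by
  have key : 2 * Δ_[c] (Δ_[b] f) (w + c) =
      Δ_[b + c] (Δ_[b + c] f) w - Δ_[b] (Δ_[b] f) (w + c + c) - Δ_[c] (Δ_[c] f) w := by
    simp only [fwdDiff]
    abel_nf
    ring_nf
  rw [hbc.fwdDiff_fwdDiff_self, hb.fwdDiff_fwdDiff_self, hc.fwdDiff_fwdDiff_self] at key
  rw [polar]
  linarith

theorem fwdDiff_smul_fwdDiff {y u c : V} (hy : IsQuadraticAlong f y c)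
    (hyu : IsQuadraticAlong f (y + u) c) (s : ℝ) :
    Δ_[s • c] (Δ_[u] f) y = s * Δ_[c] (Δ_[u] f) y := by
  have h1 := hy 1
  have h2 := hyu 1
  have h3 := hy s
  have h4 := hyu s
  rw [one_smul] at h1 h2
  simp only [fwdDiff]
  rw [add_right_comm y (s • c), add_right_comm y c, h3, h4, h1, h2]
  ring

theorem fwdDiff_fwdDiff_smul_self {x : V} (hhom : ∀ t : ℝ, 0 ≤ t → f (t • x) = t ^ 2 * f x)
    {s : ℝ} (hs : 0 ≤ s) : Δ_[s • x] (Δ_[s • x] f) x = 2 * s ^ 2 * f x := by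
  have h1 := hhom (1 + s) (by linarith)
  have h2 := hhom (1 + s + s) (by linarith)
  rw [add_smul, one_smul] at h1
  rw [add_smul, add_smul, one_smul] at h2
  simp only [fwdDiff]
  rw [h1, h2]
  ring

def IsQuadraticOn (f : V → ℝ) (W : Submodule ℝ V) : Prop :=
  ∃ q : QuadraticForm ℝ W, ∀ w : W, f w = q w

theorem IsQuadraticOn.isQuadraticAlong {W : Submodule ℝ V} (h : IsQuadraticOn f W) {z d : V}
    (hz : z ∈ W) (hd : d ∈ W) : IsQuadraticAlong f z d := by
  obtain ⟨q, hq⟩ := h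
  intro t
  have hf : ∀ x (hx : x ∈ W), f x = q ⟨x, hx⟩ := fun x hx => hq ⟨x, hx⟩
  rw [polar, hf _ (W.add_mem hz (W.smul_mem t hd)), hf _ (W.add_mem hz hd), hf z hz, hf d hd]
  exact q.map_add_smul ⟨z, hz⟩ ⟨d, hd⟩ t

theorem IsQuadraticOn.map_smul {W : Submodule ℝ V} (h : IsQuadraticOn f W) {x : V}
    (hx : x ∈ W) (t : ℝ) : f (t • x) = t ^ 2 * f x := by
  have hline := h.isQuadraticAlong W.zero_mem hx t
  have hf0 : f 0 = 0 := by
    obtain ⟨q, hq⟩ := h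
    simpa using hq 0
  simpa [polar, hf0] using hline

end SecondDifferences

section LocalQuadratic

variable {V : Type*} [NormedAddCommGroup V] [NormedSpace ℝ V]

theorem ConvexCone.exists_small_mem_interior {C : ConvexCone ℝ V} {p₀ : V}
    (hC : (C : Set V) ∈ 𝓝 p₀) {η : ℝ} (hη : 0 < η) :
    ∃ p : V, ∃ ρ > 0, ‖p‖ < η ∧ ∀ w : V, ‖w‖ < ρ → p + w ∈ C := by
  obtain ⟨δ, hδ, hball⟩ := Metric.mem_nhds_iff.mp hC
  set τ := η / (‖p₀‖ + 1)
  have hτ : 0 < τ := by positivity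
  refine ⟨τ • p₀, τ * δ, by positivity, ?_, fun w hw => ?_⟩
  · rw [norm_smul, Real.norm_of_nonneg hτ.le]
    calc τ * ‖p₀‖ < τ * (‖p₀‖ + 1) := by gcongr; linarith
      _ = η := div_mul_cancel₀ _ (by positivity)
  · have hmem : p₀ + τ⁻¹ • w ∈ C := hball <| by
      rw [mem_ball_iff_norm, add_sub_cancel_left, norm_smul, Real.norm_of_nonneg (by positivity),
        inv_mul_lt_iff₀ hτ]
      exact hw
    simpa [smul_add, smul_inv_smul₀ hτ.ne'] using C.smul_mem hτ hmem

variable {f : V → ℝ} {C : ConvexCone ℝ V} {e₀ p : V} {ε r : ℝ}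

theorem fwdDiff_fwdDiff_eq_polar_of_mem_ball
    (hline : ∀ z ∈ ball e₀ ε, ∀ d ∈ C, IsQuadraticAlong f z d) {z b c : V}
    (hz : z ∈ ball e₀ (ε / 2)) (hb : b ∈ C) (hc : c ∈ C) (hcn : ‖c‖ < ε / 2) :
    Δ_[c] (Δ_[b] f) z = polar f b c := by
  rw [mem_ball_iff_norm] at hz
  have hmem : ∀ x : V, ‖x‖ < ε / 2 → z + x ∈ ball e₀ ε := fun x hx => by
    rw [mem_ball_iff_norm, add_sub_right_comm]
    linarith [norm_add_le (z - e₀) x]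
  have hw : z - c ∈ ball e₀ ε := by simpa [sub_eq_add_neg] using hmem (-c) (by rwa [norm_neg])
  rw [show z = z - c + c by abel]
  exact fwdDiff_fwdDiff_eq_polar (hline _ hw _ (C.add_mem hb hc))
    (hline _ (by simpa using hmem c hcn) _ hb) (hline _ hw _ hc)

/-- Writing `u = (u + p) - p` and `v = (v + p) - p` with `u + p`, `v + p`, `p` in the cone reduces
the second difference along arbitrary small steps to second differences along the cone. -/
theorem fwdDiff_fwdDiff_eq_of_mem_ball
    (hline : ∀ z ∈ ball e₀ ε, ∀ d ∈ C, IsQuadraticAlong f z d)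
    (hp : ‖p‖ < ε / 8) (hpC : ∀ w : V, ‖w‖ < r → p + w ∈ C) (hr : r ≤ ε / 8)
    {y u v : V} (hy : y ∈ ball e₀ (ε / 4)) (hu : ‖u‖ < r) (hv : ‖v‖ < r) :
    Δ_[v] (Δ_[u] f) y = Δ_[v] (Δ_[u] f) e₀ := by
  have hpC' : p ∈ C := by simpa using hpC 0 (by simpa using (norm_nonneg u).trans_lt hu)
  have hp2 : ‖p‖ < ε / 2 := by linarith [norm_nonneg p]
  have hvp : ‖v + p‖ < ε / 2 := by linarith [norm_add_le v p, norm_nonneg p]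
  have key : ∀ y ∈ ball e₀ (ε / 4), Δ_[v] (Δ_[u] f) y = polar f (u + p) (v + p)
      - polar f (u + p) p - polar f p (v + p) + polar f p p := by
    intro y hy
    rw [mem_ball_iff_norm] at hy
    have hz : y - p - p ∈ ball e₀ (ε / 2) := by
      rw [mem_ball_iff_norm, show y - p - p - e₀ = (y - e₀) - (p + p) by abel]
      linarith [norm_sub_le (y - e₀) (p + p), norm_add_le p p]
    have hu' : u + p ∈ C := by rw [add_comm]; exact hpC u hu
    have hv' : v + p ∈ C := by rw [add_comm]; exact hpC v hv
    have hshift : Δ_[v] (Δ_[u] f) y = Δ_[v + p] (Δ_[u + p] f) (y - p - p)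
        - Δ_[p] (Δ_[u + p] f) (y - p - p) - Δ_[v + p] (Δ_[p] f) (y - p - p)
        + Δ_[p] (Δ_[p] f) (y - p - p) := by
      simp only [fwdDiff]
      abel_nf
    rw [hshift, fwdDiff_fwdDiff_eq_polar_of_mem_ball hline hz hu' hv' hvp,
      fwdDiff_fwdDiff_eq_polar_of_mem_ball hline hz hu' hpC' hp2,
      fwdDiff_fwdDiff_eq_polar_of_mem_ball hline hz hpC' hv' hvp,
      fwdDiff_fwdDiff_eq_polar_of_mem_ball hline hz hpC' hpC' hp2]
  rw [key y hy, key e₀ (mem_ball_self (by linarith [norm_nonneg p]))]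

theorem fwdDiff_fwdDiff_add_left_of_mem_ball
    (hline : ∀ z ∈ ball e₀ ε, ∀ d ∈ C, IsQuadraticAlong f z d)
    (hp : ‖p‖ < ε / 8) (hpC : ∀ w : V, ‖w‖ < r → p + w ∈ C) (hr : r ≤ ε / 8)
    {u u' v : V} (hu : ‖u‖ < r) (hu' : ‖u'‖ < ε / 4) (hv : ‖v‖ < r) :
    Δ_[v] (Δ_[u + u'] f) e₀ = Δ_[v] (Δ_[u] f) e₀ + Δ_[v] (Δ_[u'] f) e₀ := by
  rw [fwdDiff_fwdDiff_add_left, fwdDiff_fwdDiff_eq_of_mem_ball hline hp hpC hr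
    (by rwa [mem_ball_iff_norm, add_sub_cancel_left]) hu hv]

theorem fwdDiff_smul_fwdDiff_of_mem_ball
    (hline : ∀ z ∈ ball e₀ ε, ∀ d ∈ C, IsQuadraticAlong f z d)
    (hp : ‖p‖ < ε / 8) (hpC : ∀ w : V, ‖w‖ < r → p + w ∈ C) (hr : r ≤ ε / 8)
    {a : ℝ} (ha : |a| ≤ 1) {u v : V} (hu : ‖u‖ < r) (hv : ‖v‖ < r) :
    Δ_[a • v] (Δ_[u] f) e₀ = a * Δ_[v] (Δ_[u] f) e₀ := by
  have hε : 0 < ε := by linarith [norm_nonneg p]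
  have hp4 : ‖p‖ < ε / 4 := by linarith
  have hadd : ∀ {x x' : V}, ‖x‖ < r → ‖x'‖ < ε / 4 →
      Δ_[x' + x] (Δ_[u] f) e₀ = Δ_[x] (Δ_[u] f) e₀ + Δ_[x'] (Δ_[u] f) e₀ := fun hx hx' => by
    rw [add_comm, fwdDiff_fwdDiff_comm f u, fwdDiff_fwdDiff_add_left_of_mem_ball hline hp hpC hr
      hx hx' hu, fwdDiff_fwdDiff_comm f _ u, fwdDiff_fwdDiff_comm f _ u]
  have hcone : ∀ d ∈ C, Δ_[a • d] (Δ_[u] f) e₀ = a * Δ_[d] (Δ_[u] f) e₀ := fun d hd =>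
    fwdDiff_smul_fwdDiff (hline e₀ (mem_ball_self hε) d hd)
      (hline _ (by rw [mem_ball_iff_norm, add_sub_cancel_left]; linarith) d hd) a
  have h := hcone _ (hpC v hv)
  rw [smul_add, hadd ((norm_smul_le_of_abs_le_one ha v).trans_lt hv)
      ((norm_smul_le_of_abs_le_one ha p).trans_lt hp4),
    hcone p (by simpa using hpC 0 (by simpa using (norm_nonneg u).trans_lt hu)), hadd hv hp4] at h
  linarith

theorem exists_bilinMap_eq_fwdDiff_fwdDiff
    (hline : ∀ z ∈ ball e₀ ε, ∀ d ∈ C, IsQuadraticAlong f z d)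
    (hp : ‖p‖ < ε / 8) (hpC : ∀ w : V, ‖w‖ < r → p + w ∈ C) (hr0 : 0 < r) (hr : r ≤ ε / 8) :
    ∃ B : V →ₗ[ℝ] V →ₗ[ℝ] ℝ, ∀ u v, ‖u‖ < r → ‖v‖ < r → B u v = Δ_[v] (Δ_[u] f) e₀ := by
  have hsymm : ∀ u v, Δ_[v] (Δ_[u] f) e₀ = Δ_[u] (Δ_[v] f) e₀ := fun u v => by
    rw [fwdDiff_fwdDiff_comm]
  have hr4 : ∀ x : V, ‖x‖ < r → ‖x‖ < ε / 4 := fun x hx => by linarith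
  exact exists_bilinMap_eqOn_ball hr0
    (fun u u' v hu hu' _ hv =>
      fwdDiff_fwdDiff_add_left_of_mem_ball hline hp hpC hr hu (hr4 u' hu') hv)
    (fun a u v ha hu hv => by
      rw [hsymm, fwdDiff_smul_fwdDiff_of_mem_ball hline hp hpC hr ha hv hu, hsymm, smul_eq_mul])
    (fun u v v' hu hv hv' _ => by
      rw [hsymm, fwdDiff_fwdDiff_add_left_of_mem_ball hline hp hpC hr hv (hr4 v' hv') hu,
        hsymm u v, hsymm u v'])
    (fun a u v ha hu hv => fwdDiff_smul_fwdDiff_of_mem_ball hline hp hpC hr ha hu hv)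

theorem exists_quadraticForm_eventuallyEq {U : Set V} {p₀ : V} (hU : U ∈ 𝓝 e₀)
    (hC : (C : Set V) ∈ 𝓝 p₀) (hline : ∀ z ∈ U, ∀ d ∈ C, IsQuadraticAlong f z d)
    (hhom : ∀ x ∈ U, ∀ t : ℝ, 0 ≤ t → f (t • x) = t ^ 2 * f x) :
    ∃ Q : QuadraticForm ℝ V, f =ᶠ[𝓝 e₀] Q := by
  obtain ⟨ε, hε, hεU⟩ := Metric.mem_nhds_iff.mp hU
  obtain ⟨p, ρ, hρ, hp, hpC⟩ := C.exists_small_mem_interior hC (by positivity : 0 < ε / 8)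
  set r := min ρ (ε / 8)
  have hr0 : 0 < r := lt_min hρ (by positivity)
  obtain ⟨B, hB⟩ := exists_bilinMap_eq_fwdDiff_fwdDiff (f := f) (e₀ := e₀)
    (fun z hz d hd => hline z (hεU hz) d hd) hp
    (fun w hw => hpC w (hw.trans_le (min_le_left _ _))) hr0 (min_le_right _ _)
  refine ⟨(1 / 2 : ℝ) • LinearMap.BilinMap.toQuadraticMap B, ?_⟩
  filter_upwards [ball_mem_nhds e₀ (by positivity : 0 < ε / 4)] with x hx
  obtain ⟨s, hsx, hs⟩ := ((eventually_norm_smul_lt hr0 x).and self_mem_nhdsWithin).exists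
  have hxU : x ∈ U := hεU (ball_subset_ball (by linarith) hx)
  have key := fwdDiff_fwdDiff_eq_of_mem_ball (fun z hz d hd => hline z (hεU hz) d hd) hp
    (fun w hw => hpC w (hw.trans_le (min_le_left _ _))) (min_le_right _ _) hx hsx hsx
  rw [fwdDiff_fwdDiff_smul_self (hhom x hxU) hs.le, ← hB _ _ hsx hsx] at key
  simp only [map_smul, LinearMap.smul_apply, smul_eq_mul] at key
  have hs2 : (0 : ℝ) < s ^ 2 := by positivity
  simp only [smul_apply, LinearMap.BilinMap.toQuadraticMap_apply, smul_eq_mul]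
  nlinarith

theorem IsQuadraticOn.eq_of_eventuallyEq {W : Submodule ℝ V} (h : IsQuadraticOn f W)
    {Q : QuadraticForm ℝ V} {z₀ : V} (hz₀ : z₀ ∈ W) (hQ : f =ᶠ[𝓝 z₀] Q) :
    ∀ z ∈ W, f z = Q z := by
  obtain ⟨q, hq⟩ := h
  have : q = Q.comp W.subtype := by
    refine QuadraticMap.eq_of_eventuallyEq (x := ⟨z₀, hz₀⟩) ?_
    filter_upwards [(continuous_subtype_val.tendsto _).eventually hQ] with w hw
    rw [← hq, hw, QuadraticMap.comp_apply, Submodule.coe_subtype]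
  intro z hz
  rw [hq ⟨z, hz⟩, this, QuadraticMap.comp_apply, Submodule.coe_subtype]

end LocalQuadratic

section Grassmannian

variable {k : ℕ} {V : Type*}

def Gr.spanOf [AddCommGroup V] [Module ℝ V] (v : {v : Fin k → V // LinearIndependent ℝ v}) :
    Gr k V :=
  ⟨Submodule.span ℝ (range v.1), by rw [finrank_span_eq_card v.2, Fintype.card_fin]⟩

theorem Gr.spanOf_surjective [AddCommGroup V] [Module ℝ V] (hk : 0 < k) :
    Function.Surjective (Gr.spanOf (k := k) (V := V)) := by
  intro X
  have : Module.Finite ℝ X.1 := Module.finite_of_finrank_pos (by rw [X.2]; exact hk)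
  let b := Module.finBasisOfFinrankEq ℝ X.1 X.2
  refine ⟨⟨X.1.subtype ∘ b, b.linearIndependent.map' _ X.1.ker_subtype⟩, Subtype.ext ?_⟩
  change Submodule.span ℝ (range (X.1.subtype ∘ b)) = X.1
  rw [range_comp, Submodule.span_image, b.span_eq, Submodule.map_subtype_top]

variable [NormedAddCommGroup V] [NormedSpace ℝ V] {f : V → ℝ}

theorem Gr.continuous_spanOf : Continuous (Gr.spanOf (k := k) (V := V)) :=
  continuous_coinduced_rng

theorem Gr.isOpen_setOf_inter_nonempty {s : Set V} (hs : IsOpen s) :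
    IsOpen {Z : Gr k V | ((Z.1 : Set V) ∩ s).Nonempty} := by
  change IsOpen (Gr.spanOf (k := k) (V := V) ⁻¹' _)
  have : Gr.spanOf ⁻¹' {Z : Gr k V | ((Z.1 : Set V) ∩ s).Nonempty} =
      ⋃ c : Fin k → ℝ,
        (fun v : {v : Fin k → V // LinearIndependent ℝ v} => ∑ i, c i • v.1 i) ⁻¹' s := by
    ext v
    simp [Gr.spanOf, Set.Nonempty, Submodule.mem_span_range_iff_exists_fun]
  rw [this]
  exact isOpen_iUnion fun c => hs.preimage <|
    continuous_finsetSum _ fun i _ =>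
      continuous_const.smul ((continuous_apply i).comp continuous_subtype_val)

theorem Gr.eventually_exists_mem {e : {v : Fin k → V // LinearIndependent ℝ v}}
    {𝒪 : Set (Gr k V)} (h : 𝒪 ∈ 𝓝 (Gr.spanOf e)) : ∀ᶠ u in 𝓝 e.1, ∃ Z ∈ 𝒪, ∀ i, u i ∈ Z.1 := by
  obtain ⟨t, ht, hsub⟩ := (mem_nhds_induced _ _ _).mp (Gr.continuous_spanOf.continuousAt h)
  filter_upwards [ht, e.2.eventually] with u hut hu
  exact ⟨Gr.spanOf ⟨u, hu⟩, hsub hut, fun i => Submodule.subset_span (mem_range_self i)⟩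

theorem Gr.exists_eventually_exists_mem (hk : 0 < k) {X : Gr k V} {P : Gr k V → Prop}
    (h : ∀ᶠ Z in 𝓝 X, P Z) : ∃ x : V, ∀ᶠ w in 𝓝 x, ∃ Z, P Z ∧ w ∈ Z.1 := by
  obtain ⟨e, rfl⟩ := Gr.spanOf_surjective hk X
  let i : Fin k := ⟨0, hk⟩
  have ht : Tendsto (fun w => Function.update e.1 i w) (𝓝 (e.1 i)) (𝓝 e.1) := by
    have hc : Continuous fun w : V => Function.update e.1 i w :=
      continuous_const.update i continuous_id
    simpa using hc.tendsto (e.1 i)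
  refine ⟨e.1 i, ?_⟩
  filter_upwards [ht.eventually (Gr.eventually_exists_mem h)] with w ⟨Z, hZ, hmem⟩
  exact ⟨Z, hZ, by simpa using hmem i⟩

theorem Gr.eq_of_eventually_eqOn {Q Q' : QuadraticForm ℝ V} (hk : 0 < k) {X : Gr k V}
    (h : ∀ᶠ Z in 𝓝 X, ∀ z ∈ Z.1, f z = Q z) (h' : ∀ᶠ Z in 𝓝 X, ∀ z ∈ Z.1, f z = Q' z) :
    Q = Q' := by
  obtain ⟨x, hx⟩ := Gr.exists_eventually_exists_mem hk (h.and h')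
  refine QuadraticMap.eq_of_eventuallyEq (x := x) ?_
  filter_upwards [hx] with w ⟨Z, ⟨hQ, hQ'⟩, hw⟩
  rw [← hQ w hw, hQ' w hw]

theorem Gr.exists_cone_of_mem_nhds (hk : 2 ≤ k) {𝒰 : Set (Gr k V)} {X : Gr k V}
    (h𝒰 : 𝒰 ∈ 𝓝 X) : ∃ e₀ ∈ X.1, ∃ U ∈ 𝓝 e₀, ∃ (C : ConvexCone ℝ V) (p₀ : V),
      (C : Set V) ∈ 𝓝 p₀ ∧ ∀ z ∈ U, ∀ d ∈ C, ∃ Z ∈ 𝒰, z ∈ Z.1 ∧ d ∈ Z.1 := by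
  obtain ⟨e, rfl⟩ := Gr.spanOf_surjective (by omega) X
  let i₀ : Fin k := ⟨0, by omega⟩
  let i₁ : Fin k := ⟨1, by omega⟩
  have hne : i₁ ≠ i₀ := by simp [i₀, i₁, Fin.ext_iff]
  have hpair : ∀ᶠ q : V × V in 𝓝 (e.1 i₀, e.1 i₁), ∃ Z ∈ 𝒰, q.1 ∈ Z.1 ∧ q.2 ∈ Z.1 := by
    have hc : Continuous fun q : V × V => Function.update (Function.update e.1 i₀ q.1) i₁ q.2 :=
      ((continuous_const : Continuous fun _ : V × V => e.1).update i₀ continuous_fst).update i₁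
        continuous_snd
    have hlim : Tendsto (fun q : V × V => Function.update (Function.update e.1 i₀ q.1) i₁ q.2)
        (𝓝 (e.1 i₀, e.1 i₁)) (𝓝 e.1) := by
      simpa using hc.tendsto (e.1 i₀, e.1 i₁)
    filter_upwards [hlim.eventually (Gr.eventually_exists_mem h𝒰)] with q ⟨Z, hZ, hmem⟩
    exact ⟨Z, hZ, by simpa [hne.symm] using hmem i₀, by simpa using hmem i₁⟩
  obtain ⟨U, hU, U', hU', hUU'⟩ := mem_nhds_prod_iff.mp hpair
  obtain ⟨δ, hδ, hδU'⟩ := Metric.mem_nhds_iff.mp hU'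
  refine ⟨e.1 i₀, Submodule.subset_span (mem_range_self i₀), U, hU,
    ConvexCone.hull ℝ (ball (e.1 i₁) δ), e.1 i₁,
    mem_of_superset (ball_mem_nhds _ hδ) ConvexCone.subset_hull, fun z hz d hd => ?_⟩
  obtain ⟨c, -, y, hy, rfl⟩ := (ConvexCone.mem_hull_of_convex (convex_ball _ _)).mp hd
  obtain ⟨Z, hZ, hzZ, hyZ⟩ := hUU' (mk_mem_prod hz (hδU' hy))
  exact ⟨Z, hZ, hzZ, Z.1.smul_mem c hyZ⟩

end Grassmannian

section Assembly

variable {k : ℕ} {V : Type*} [NormedAddCommGroup V] [NormedSpace ℝ V] {f : V → ℝ}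

theorem Gr.exists_quadraticForm_eventually_eqOn (hk : 2 ≤ k) {𝒰 : Set (Gr k V)} {X : Gr k V}
    (h𝒰 : 𝒰 ∈ 𝓝 X) (hquad : ∀ Z ∈ 𝒰, IsQuadraticOn f Z.1) :
    ∃ Q : QuadraticForm ℝ V, ∀ᶠ Z in 𝓝 X, ∀ z ∈ Z.1, f z = Q z := by
  obtain ⟨e₀, he₀, U, hU, C, p₀, hC, hplane⟩ := Gr.exists_cone_of_mem_nhds hk h𝒰
  have hline : ∀ z ∈ U, ∀ d ∈ C, IsQuadraticAlong f z d := fun z hz d hd => by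
    obtain ⟨Z, hZ, hzZ, hdZ⟩ := hplane z hz d hd
    exact (hquad Z hZ).isQuadraticAlong hzZ hdZ
  have hhom : ∀ x ∈ U, ∀ t : ℝ, 0 ≤ t → f (t • x) = t ^ 2 * f x := fun x hx t _ => by
    obtain ⟨Z, hZ, hxZ, -⟩ := hplane x hx p₀ (mem_of_mem_nhds hC)
    exact (hquad Z hZ).map_smul hxZ t
  obtain ⟨Q, hQ⟩ := exists_quadraticForm_eventuallyEq hU hC hline hhom
  have hmeet : ∀ᶠ Z in 𝓝 X, ((Z.1 : Set V) ∩ {w | f =ᶠ[𝓝 w] Q}).Nonempty :=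
    (Gr.isOpen_setOf_inter_nonempty isOpen_setOfPred_eventually_nhds).mem_nhds ⟨e₀, he₀, hQ⟩
  refine ⟨Q, ?_⟩
  filter_upwards [h𝒰, hmeet] with Z hZ ⟨z₀, hz₀Z, hz₀⟩
  exact (hquad Z hZ).eq_of_eventuallyEq hz₀Z hz₀

theorem IsPreconnected.eventually_eqOn_of_forall_exists (hk : 0 < k) {𝒰 : Set (Gr k V)}
    (h𝒰 : IsPreconnected 𝒰)
    (hloc : ∀ X ∈ 𝒰, ∃ Q : QuadraticForm ℝ V, ∀ᶠ Z in 𝓝 X, ∀ z ∈ Z.1, f z = Q z)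
    {X₀ : Gr k V} (hX₀ : X₀ ∈ 𝒰) {Q₀ : QuadraticForm ℝ V}
    (hQ₀ : ∀ᶠ Z in 𝓝 X₀, ∀ z ∈ Z.1, f z = Q₀ z) :
    ∀ X ∈ 𝒰, ∀ᶠ Z in 𝓝 X, ∀ z ∈ Z.1, f z = Q₀ z := by
  let G : QuadraticForm ℝ V → Set (Gr k V) := fun Q => {X | ∀ᶠ Z in 𝓝 X, ∀ z ∈ Z.1, f z = Q z}
  have hG : ∀ Q, IsOpen (G Q) := fun Q => isOpen_setOfPred_eventually_nhds
  refine h𝒰.subset_left_of_subset_union (v := ⋃ Q ∈ {Q | Q ≠ Q₀}, G Q) (hG Q₀)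
    (isOpen_biUnion fun Q _ => hG Q) ?_ ?_ ⟨X₀, hX₀, hQ₀⟩
  · refine Set.disjoint_left.mpr fun X hX hX' => ?_
    obtain ⟨Q, hQ, hXQ⟩ := mem_iUnion₂.mp hX'
    exact hQ (Gr.eq_of_eventually_eqOn hk hXQ hX)
  · intro X hX
    obtain ⟨Q, hQ⟩ := hloc X hX
    by_cases hQQ₀ : Q = Q₀
    · exact Or.inl (hQQ₀ ▸ hQ)
    · exact Or.inr (mem_iUnion₂.mpr ⟨Q, hQQ₀, hQ⟩)

theorem IsMinkowskiSeminorm.nonneg_of_eventuallyEq {Φ : V → ℝ} (hΦ : IsMinkowskiSeminorm Φ)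
    {Q : QuadraticForm ℝ V} {x : V} (hQ : (fun w => Φ w ^ 2) =ᶠ[𝓝 x] Q) (v : V) : 0 ≤ Q v := by
  obtain ⟨hΦ0, hΦhom, hΦsub⟩ := hΦ
  obtain ⟨t, ht, hadd, hsub⟩ := exists_ne_zero_add_smul_mem_sub_smul_mem hQ v
  have hpar := Q.map_add_smul_add_map_sub_smul x v t
  rw [← hadd, ← hsub, ← hQ.self_of_nhds] at hpar
  have hconv : 2 * Φ x ≤ Φ (x + t • v) + Φ (x - t • v) := by
    have := hΦsub (x + t • v) (x - t • v)
    rwa [add_add_sub_cancel, ← two_smul ℝ x, hΦhom 2 x zero_le_two] at this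
  have ht2 : 0 < 2 * t ^ 2 := by positivity
  nlinarith [hΦ0 x, sq_nonneg (Φ (x + t • v) - Φ (x - t • v))]

end Assembly

theorem ellipses_assemble_into_ellipsoid_general
    {V : Type*} [NormedAddCommGroup V] [NormedSpace ℝ V] (k : ℕ) (hk : 2 ≤ k)
    (Φ : V → ℝ) (hΦ : IsMinkowskiNorm Φ)
    (𝒰 : Set (Gr k V)) (h𝒰open : IsOpen 𝒰) (h𝒰conn : IsConnected 𝒰)
    (hip : ∀ X ∈ 𝒰, ∃ q : QuadraticForm ℝ X.1, q.PosDef ∧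
      ∀ x : X.1, Φ (x : V) = Real.sqrt (q x)) :
    ∃ Q : QuadraticForm ℝ V,
      (∀ X ∈ 𝒰, ∀ x : X.1, (Φ (x : V)) ^ 2 = Q (x : V)) ∧
      (∀ v : V, 0 ≤ Q v) ∧
      (∀ Q' : QuadraticForm ℝ V,
        (∀ X ∈ 𝒰, ∀ x : X.1, (Φ (x : V)) ^ 2 = Q' (x : V)) → Q' = Q) := by
  have hk₀ : 0 < k := by omega
  have hquad : ∀ X ∈ 𝒰, IsQuadraticOn (fun v => Φ v ^ 2) X.1 := fun X hX => by
    obtain ⟨q, hq, hΦq⟩ := hip X hX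
    exact ⟨q, fun x => by rw [← Real.sq_sqrt (hq.nonneg x), ← hΦq]⟩
  have hloc := fun (X : Gr k V) (hX : X ∈ 𝒰) =>
    Gr.exists_quadraticForm_eventually_eqOn hk (h𝒰open.mem_nhds hX) hquad
  obtain ⟨X₀, hX₀⟩ := h𝒰conn.nonempty
  obtain ⟨Q, hQ⟩ := hloc X₀ hX₀
  have hglobal := h𝒰conn.isPreconnected.eventually_eqOn_of_forall_exists hk₀ hloc hX₀ hQ
  refine ⟨Q, fun X hX x => (hglobal X hX).self_of_nhds x x.2, fun v => ?_, fun Q' hQ' => ?_⟩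
  · obtain ⟨x, hx⟩ := Gr.exists_eventually_exists_mem hk₀ hQ
    refine hΦ.1.nonneg_of_eventuallyEq (x := x) ?_ v
    filter_upwards [hx] with w ⟨Z, hZ, hw⟩
    exact hZ w hw
  · refine Gr.eq_of_eventually_eqOn hk₀ ?_ hQ
    filter_upwards [h𝒰open.mem_nhds hX₀] with Z hZ z hz
    exact hQ' Z hZ ⟨z, hz⟩

/-- **Ellipses only assemble into an ellipsoid.** If the restriction of a Minkowski norm
`Φ` to every `k`-plane from a nonempty connected open set `𝒰` is an inner product norm,
then there is a unique quadratic form `Q` on `V` with `(Φ|_X)² = Q|_X` for all `X ∈ 𝒰`,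
and it is nonnegative definite. -/
theorem ellipses_assemble_into_ellipsoid
    {V : Type*} [NormedAddCommGroup V] [NormedSpace ℝ V] [FiniteDimensional ℝ V]
    (n k : ℕ) (hn : Module.finrank ℝ V = n) (hk : 2 ≤ k) (hkn : k < n)
    (Φ : V → ℝ) (hΦ : IsMinkowskiNorm Φ)
    (𝒰 : Set (Gr k V)) (h𝒰open : IsOpen 𝒰) (h𝒰conn : IsConnected 𝒰)
    (hip : ∀ X ∈ 𝒰, ∃ q : QuadraticForm ℝ X.1, q.PosDef ∧
      ∀ x : X.1, Φ (x : V) = Real.sqrt (q x)) :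
    ∃ Q : QuadraticForm ℝ V,
      (∀ X ∈ 𝒰, ∀ x : X.1, (Φ (x : V)) ^ 2 = Q (x : V)) ∧
      (∀ v : V, 0 ≤ Q v) ∧
      (∀ Q' : QuadraticForm ℝ V,
        (∀ X ∈ 𝒰, ∀ x : X.1, (Φ (x : V)) ^ 2 = Q' (x : V)) → Q' = Q) :=
  ellipses_assemble_into_ellipsoid_general k hk Φ hΦ 𝒰 h𝒰open h𝒰conn hip
end

section
/- Let v = (v₁, …, v_n) be a basis of a finite-dimensional real vector space V and F : V → ℝ a function whose restriction to each coordinate plane Π_{ij} = span{v_i, v_j} (1 ≤ i ≠ j ≤ n) is a quadratic form on that plane. Then there exists a unique quadratic form Q on V such that Q|_{Π_{ij}} = F|_{Π_{ij}} for all i ≠ j. -/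
open Module Set Pointwise

/-!
A quadratic map is determined by its values at the basis vectors `b i` and at the sums
`b i + b j`, and any prescribed such values are attained by the quadratic map of an upper
triangular bilinear form. On the plane `span {x, y}` the identity
`Q (a • x + c • y) = a² Q x + c² Q y + a c (Q (x + y) - Q x - Q y)` shows that a quadratic form
there is fixed by its values at `x`, `y` and `x + y`. So the quadratic form taking the values
of `F` at all `v i` and `v i + v j` restricts to `F` on each coordinate plane, and it is the only
one: with at least two basis vectors, every `v i` lies in some coordinate plane.
-/

open Submodule

namespace QuadraticMap

variable {ι R M N : Type*} [CommRing R] [AddCommGroup M] [Module R M] [AddCommGroup N]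
  [Module R N]

theorem map_smul_add_smul (Q : QuadraticMap R M N) (a c : R) (x y : M) :
    Q (a • x + c • y) = (a * a) • Q x + (c * c) • Q y + (a * c) • polar Q x y := by
  rw [QuadraticMap.map_add Q, QuadraticMap.map_smul, QuadraticMap.map_smul, polar_smul_left,
    polar_smul_right, smul_smul]

theorem apply_smul_add_smul_eq {Q₁ Q₂ : QuadraticMap R M N} {x y : M} (hx : Q₁ x = Q₂ x)
    (hy : Q₁ y = Q₂ y) (hxy : Q₁ (x + y) = Q₂ (x + y)) (a c : R) :
    Q₁ (a • x + c • y) = Q₂ (a • x + c • y) := by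
  simp only [map_smul_add_smul, polar, hx, hy, hxy]

theorem eqOn_span_pair {Q : QuadraticMap R M N} {f : M → N} {x y : M}
    (hf : ∃ q : QuadraticMap R (span R {x, y}) N, ∀ w : span R {x, y}, f w = q w)
    (hx : Q x = f x) (hy : Q y = f y) (hxy : Q (x + y) = f (x + y)) :
    ∀ w ∈ span R {x, y}, Q w = f w := by
  obtain ⟨q, hq⟩ := hf
  intro w hw
  obtain ⟨a, c, rfl⟩ := mem_span_pair.mp hw
  let x' : span R {x, y} := ⟨x, subset_span (by simp)⟩
  let y' : span R {x, y} := ⟨y, subset_span (by simp)⟩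
  exact (apply_smul_add_smul_eq (Q₁ := Q.comp (span R {x, y}).subtype) (hx.trans (hq x'))
    (hy.trans (hq y')) (hxy.trans (hq (x' + y'))) a c).trans (hq (a • x' + c • y')).symm

/-- For `f = ⇑Q` this is `(Q.toBilin b).toQuadraticMap`; the triangular shape of the Gram
matrix avoids dividing by `2`. -/
noncomputable def ofBasis [LinearOrder ι] (b : Basis ι R M) (f : M → N) : QuadraticMap R M N :=
  LinearMap.BilinMap.toQuadraticMap <| b.constr R fun i => b.constr R fun j =>
    if i = j then f (b i) else if i < j then polar f (b i) (b j) else 0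

section ofBasis

variable [LinearOrder ι] (b : Basis ι R M) (f : M → N)

theorem ofBasis_apply_basis (i : ι) : ofBasis b f (b i) = f (b i) := by
  simp [ofBasis]

theorem ofBasis_apply_add_basis {i j : ι} (hij : i ≠ j) :
    ofBasis b f (b i + b j) = f (b i + b j) := by
  rcases hij.lt_or_gt with h | h
  · simp only [ofBasis, polar, LinearMap.BilinMap.toQuadraticMap_apply, map_add,
      Basis.constr_basis, LinearMap.add_apply, if_pos, hij, hij.symm, h, h.not_gt,
      if_false]
    abel
  · simp only [ofBasis, polar, LinearMap.BilinMap.toQuadraticMap_apply, map_add,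
      Basis.constr_basis, LinearMap.add_apply, add_comm (b j), hij, hij.symm, h, h.not_gt,
      if_false, if_true]
    abel

theorem ofBasis_coe (Q : QuadraticMap R M N) : ofBasis b Q = Q :=
  toQuadraticMap_toBilin Q b

theorem ofBasis_congr {f g : M → N} (h : ∀ i, f (b i) = g (b i))
    (h₂ : ∀ i j, i ≠ j → f (b i + b j) = g (b i + b j)) : ofBasis b f = ofBasis b g := by
  refine congrArg LinearMap.BilinMap.toQuadraticMap (b.ext fun i => b.ext fun j => ?_)
  simp only [Basis.constr_basis]
  split_ifs with hij
  · exact h i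
  · simp only [polar, h, h₂ i j hij]
  · rfl

end ofBasis

theorem ext_basis (b : Basis ι R M) {Q₁ Q₂ : QuadraticMap R M N}
    (h : ∀ i, Q₁ (b i) = Q₂ (b i))
    (h₂ : ∀ i j, i ≠ j → Q₁ (b i + b j) = Q₂ (b i + b j)) : Q₁ = Q₂ := by
  let : LinearOrder ι := IsWellOrder.linearOrder WellOrderingRel
  rw [← ofBasis_coe b Q₁, ← ofBasis_coe b Q₂]
  exact ofBasis_congr b h h₂

end QuadraticMap

/-- **Frame of quadratic forms.** If the restrictions of `F : V → ℝ` to all coordinate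
planes of a basis are quadratic forms, then there is a unique quadratic form `Q` on `V`
agreeing with `F` on all coordinate planes. -/
theorem frame_of_quadratic_forms
    {V : Type*} [AddCommGroup V] [Module ℝ V]
    (n : ℕ) (hn : 2 ≤ n) (v : Basis (Fin n) ℝ V) (F : V → ℝ)
    (hF : ∀ i j : Fin n, i ≠ j →
      ∃ q : QuadraticForm ℝ (Submodule.span ℝ {v i, v j}),
        ∀ w : Submodule.span ℝ {v i, v j}, F (w : V) = q w) :
    ∃! Q : QuadraticForm ℝ V,
      ∀ i j : Fin n, i ≠ j → ∀ w ∈ Submodule.span ℝ {v i, v j}, Q w = F w := by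
  have mem_left {i j : Fin n} : v i ∈ span ℝ {v i, v j} := subset_span (by simp)
  have add_mem_span {i j : Fin n} : v i + v j ∈ span ℝ {v i, v j} :=
    add_mem mem_left (subset_span (by simp))
  have hQ (i j : Fin n) (hij : i ≠ j) :
      ∀ w ∈ span ℝ {v i, v j}, QuadraticMap.ofBasis v F w = F w :=
    QuadraticMap.eqOn_span_pair (hF i j hij) (QuadraticMap.ofBasis_apply_basis v F i)
      (QuadraticMap.ofBasis_apply_basis v F j) (QuadraticMap.ofBasis_apply_add_basis v F hij)
  refine ⟨_, hQ, fun Q' hQ' => QuadraticMap.ext_basis v (fun i => ?_) fun i j hij => ?_⟩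
  · have : Nontrivial (Fin n) := Fin.nontrivial_iff_two_le.mpr hn
    obtain ⟨j, hji⟩ := exists_ne i
    rw [hQ' i j hji.symm _ mem_left, hQ i j hji.symm _ mem_left]
  · rw [hQ' i j hij _ add_mem_span, hQ i j hij _ add_mem_span]
end

section
/- Let Φ be a Minkowski norm on an n-dimensional real vector space V with unit ball B. Let X₁, X₂ be k-dimensional linear subspaces of V and Y an (n−k)-dimensional linear subspace such that B ⊂ (B ∩ X_i) + Y for i = 1, 2. Then (B ∩ X₁) + Y = (B ∩ X₂) + Y. -/
open Module Set Pointwise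

theorem Set.add_eq_add_of_subset_of_subset_add {G S : Type*} [AddSemigroup G] [SetLike S G]
    [AddMemClass S G] {A B : Set G} {Y : S} (hAB : A ⊆ B) (hBA : B ⊆ A + Y) :
    A + Y = B + Y := by
  refine (add_subset_add_right hAB).antisymm ?_
  calc B + Y ⊆ A + Y + Y := add_subset_add_right hBA
    _ = A + (Y + Y) := add_assoc _ _ _
    _ ⊆ A + Y := add_subset_add_left (add_subset_iff.2 fun _ ha _ hb => add_mem ha hb)

theorem two_cylinders_same_generatrix_general
    {V : Type*} [NormedAddCommGroup V] [NormedSpace ℝ V]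
    (B : Set V)
    (X₁ X₂ Y : Submodule ℝ V)
    (h₁ : B ⊆ (B ∩ (X₁ : Set V)) + (Y : Set V))
    (h₂ : B ⊆ (B ∩ (X₂ : Set V)) + (Y : Set V)) :
    (B ∩ (X₁ : Set V)) + (Y : Set V) = (B ∩ (X₂ : Set V)) + (Y : Set V) := by
  rw [add_eq_add_of_subset_of_subset_add inter_subset_left h₁,
    add_eq_add_of_subset_of_subset_add inter_subset_left h₂]

/-- **Two cylinders with the same generatrix coincide.** -/
theorem two_cylinders_same_generatrix
    {V : Type*} [NormedAddCommGroup V] [NormedSpace ℝ V] [FiniteDimensional ℝ V]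
    (n k : ℕ) (hn : Module.finrank ℝ V = n)
    (Φ : V → ℝ) (hΦ : IsMinkowskiNorm Φ) (B : Set V) (hB : B = {v | Φ v ≤ 1})
    (X₁ X₂ Y : Submodule ℝ V)
    (hX₁ : Module.finrank ℝ X₁ = k) (hX₂ : Module.finrank ℝ X₂ = k)
    (hY : Module.finrank ℝ Y = n - k)
    (h₁ : B ⊆ (B ∩ (X₁ : Set V)) + (Y : Set V))
    (h₂ : B ⊆ (B ∩ (X₂ : Set V)) + (Y : Set V)) :
    (B ∩ (X₁ : Set V)) + (Y : Set V) = (B ∩ (X₂ : Set V)) + (Y : Set V) :=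
  two_cylinders_same_generatrix_general B X₁ X₂ Y h₁ h₂
end

section
/- Let Φ be a Minkowski norm on an n-dimensional real vector space V with unit ball B, let 𝒰 ⊂ Gr_k V be an open set and X₀ ∈ 𝒰. Suppose that all subspaces X ∈ 𝒰 are Φ-contracting with one and the same contracting direction Y₀ ∈ Gr_{n−k} V. Then B is locally cylindrical near X₀. -/
/-!
Let `P` be the projection onto `X₀` along `Y₀` and `K = B ∩ X₀`. Since `P` does not increase `Φ`,
`B ⊆ K + Y₀`. Conversely, every subspace close to `X₀` is the graph `{x + T x}` of an operator
`T : X₀ → V` of small norm and hence lies in `𝒰`. Taking for `T` a rank-one operator with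
`T x = y` gives one `δ > 0` such that `Φ (x + y) ≤ Φ x` whenever `x ∈ X₀`, `y ∈ Y₀` and
`‖y‖ < δ ‖x‖`. So `K + Y₀` lies in `B` on the open cone `‖v - P v‖ < δ ‖P v‖` around `X₀ ∖ 0`,
and `B` and `K + Y₀` agree on the union of that cone with the open unit ball.
-/

open Module Set Pointwise

open Filter Topology

namespace IsMinkowskiSeminorm

variable {V : Type*} [AddCommGroup V] [Module ℝ V] {Φ : V → ℝ}

theorem map_zero (hΦ : IsMinkowskiSeminorm Φ) : Φ 0 = 0 := by
  simpa using hΦ.2.1 0 0 le_rfl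

theorem convexOn (hΦ : IsMinkowskiSeminorm Φ) : ConvexOn ℝ univ Φ := by
  refine ⟨convex_univ, fun x _ y _ a b ha hb _ => ?_⟩
  calc Φ (a • x + b • y) ≤ Φ (a • x) + Φ (b • y) := hΦ.2.2 _ _
    _ = a * Φ x + b * Φ y := by rw [hΦ.2.1 a x ha, hΦ.2.1 b y hb]

theorem convex_le (hΦ : IsMinkowskiSeminorm Φ) (r : ℝ) : Convex ℝ {v | Φ v ≤ r} := by
  simpa using hΦ.convexOn.convex_le r

end IsMinkowskiSeminorm

theorem IsMinkowskiSeminorm.continuous {V : Type*} [NormedAddCommGroup V] [NormedSpace ℝ V]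
    [FiniteDimensional ℝ V] {Φ : V → ℝ} (hΦ : IsMinkowskiSeminorm Φ) : Continuous Φ :=
  continuousOn_univ.1 (hΦ.convexOn.continuousOn isOpen_univ)

namespace IsMinkowskiNorm

variable {V : Type*} [NormedAddCommGroup V] [NormedSpace ℝ V] [FiniteDimensional ℝ V]
  {Φ : V → ℝ}

theorem exists_pos_mul_norm_le (hΦ : IsMinkowskiNorm Φ) : ∃ c > 0, ∀ v, c * ‖v‖ ≤ Φ v := by
  obtain ⟨c, hc, hcΦ⟩ := (isCompact_sphere (0 : V) 1).exists_forall_le'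
    hΦ.1.continuous.continuousOn fun v hv => hΦ.2 v (ne_zero_of_mem_unit_sphere ⟨v, hv⟩)
  refine ⟨c, hc, fun v => ?_⟩
  rcases eq_or_ne v 0 with rfl | hv
  · simp [hΦ.1.map_zero]
  · have hv' : 0 < ‖v‖ := norm_pos_iff.2 hv
    have := hcΦ (‖v‖⁻¹ • v) (by simp [norm_smul, hv'.ne'])
    rwa [hΦ.1.2.1 _ _ (inv_nonneg.2 hv'.le), le_inv_mul_iff₀ hv', mul_comm] at this

theorem isCompact_unitBall (hΦ : IsMinkowskiNorm Φ) : IsCompact {v | Φ v ≤ 1} := by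
  obtain ⟨c, hc, hcΦ⟩ := hΦ.exists_pos_mul_norm_le
  refine Metric.isCompact_of_isClosed_isBounded (isClosed_le hΦ.1.continuous continuous_const)
    (isBounded_iff_forall_norm_le.2 ⟨c⁻¹, fun v hv => ?_⟩)
  rw [← mul_one c⁻¹, le_inv_mul_iff₀ hc]
  exact (hcΦ v).trans hv

end IsMinkowskiNorm

namespace IsContractingWithDirection

variable {V : Type*} [AddCommGroup V] [Module ℝ V] {Φ : V → ℝ} {X Y : Submodule ℝ V}

theorem apply_add_le (h : IsContractingWithDirection Φ X Y) {x y : V} (hxy : x + y ∈ X)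
    (hy : y ∈ Y) : Φ (x + y) ≤ Φ x := by
  obtain ⟨hXY, hΦ⟩ := h
  have hproj : X.projection Y hXY x = x + y := by
    simpa [Submodule.projection_apply_of_mem_left hXY hxy,
      Submodule.projection_apply_of_mem_right hXY hy] using
      map_sub (X.projection Y hXY) (x + y) y
  calc Φ (x + y) = Φ (X.projection Y hXY x) := by rw [hproj]
    _ ≤ Φ x := hΦ x

theorem subset_inter_add (h : IsContractingWithDirection Φ X Y) (r : ℝ) :
    {v | Φ v ≤ r} ⊆ ({v | Φ v ≤ r} ∩ X) + (Y : Set V) := by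
  obtain ⟨hXY, hΦ⟩ := h
  intro v hv
  refine ⟨X.projection Y hXY v, ⟨(hΦ v).trans hv, Submodule.projection_apply_mem hXY v⟩,
    v - X.projection Y hXY v, ?_, add_sub_cancel _ _⟩
  rw [← Submodule.projection_eq_self_sub_projection hXY]
  exact Submodule.projection_apply_mem _ v

end IsContractingWithDirection

theorem ContinuousLinearMap.exists_apply_eq_norm_eq {𝕜 E F : Type*} [RCLike 𝕜]
    [NormedAddCommGroup E] [NormedSpace 𝕜 E] [NormedAddCommGroup F] [NormedSpace 𝕜 F]
    {x : E} (hx : x ≠ 0) (y : F) : ∃ T : E →L[𝕜] F, T x = y ∧ ‖T‖ = ‖y‖ / ‖x‖ := by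
  obtain ⟨g, hg, hgx⟩ := exists_dual_vector 𝕜 x (norm_ne_zero_iff.2 hx)
  refine ⟨((‖x‖⁻¹ : 𝕜) • g).smulRight y, ?_, ?_⟩
  · simp [hgx, hx]
  · rw [norm_smulRight_apply, norm_smul, hg]
    simp [div_eq_inv_mul]

theorem Gr.eventually_range_subtype_add_mem {V : Type*} [NormedAddCommGroup V]
    [NormedSpace ℝ V] [FiniteDimensional ℝ V] {k : ℕ} {𝒰 : Set (Gr k V)} (h𝒰 : IsOpen 𝒰)
    {X₀ : Gr k V} (hX₀ : X₀ ∈ 𝒰) :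
    ∀ᶠ T : X₀.1 →L[ℝ] V in 𝓝 0,
      ∃ X ∈ 𝒰, X.1 = LinearMap.range (X₀.1.subtype + (T : X₀.1 →ₗ[ℝ] V)) := by
  let b := Module.finBasisOfFinrankEq ℝ X₀.1 X₀.2
  let q : {v : Fin k → V // LinearIndependent ℝ v} → Gr k V := fun v =>
    ⟨Submodule.span ℝ (Set.range v.1), by rw [finrank_span_eq_card v.2, Fintype.card_fin]⟩
  let frame : (X₀.1 →L[ℝ] V) → Fin k → V := fun T i => b i + T (b i)
  have span_frame (T : X₀.1 →L[ℝ] V) :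
      Submodule.span ℝ (range (frame T)) =
        LinearMap.range (X₀.1.subtype + (T : X₀.1 →ₗ[ℝ] V)) := by
    rw [show frame T = (X₀.1.subtype + (T : X₀.1 →ₗ[ℝ] V)) ∘ b from rfl, Set.range_comp,
      Submodule.span_image, b.span_eq, Submodule.map_top]
  have hO : IsOpen (Subtype.val '' (q ⁻¹' 𝒰)) :=
    isOpen_setOfPred_linearIndependent.isOpenMap_subtype_val _
      (h𝒰.preimage continuous_coinduced_rng)
  have hframe : Continuous frame := by fun_prop
  have hmem : frame 0 ∈ Subtype.val '' (q ⁻¹' 𝒰) := by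
    have hli : LinearIndependent ℝ (frame 0) := by
      simpa [frame, Function.comp_def] using
        b.linearIndependent.map' X₀.1.subtype (Submodule.ker_subtype _)
    have hq : q ⟨frame 0, hli⟩ = X₀ := Subtype.ext <| by
      change Submodule.span ℝ (range (frame 0)) = X₀.1
      simp [span_frame]
    exact ⟨⟨frame 0, hli⟩, by rwa [Set.mem_preimage, hq], rfl⟩
  filter_upwards [hframe.continuousAt.preimage_mem_nhds (hO.mem_nhds hmem)]
  rintro T ⟨v, hv, hvT⟩
  exact ⟨q v, hv, by simp only [q, hvT, span_frame]⟩

section Cylinder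

variable {V : Type*} [NormedAddCommGroup V] [NormedSpace ℝ V] [FiniteDimensional ℝ V]
  {Φ : V → ℝ}

theorem exists_pos_forall_apply_add_le {k : ℕ} {𝒰 : Set (Gr k V)} (h𝒰 : IsOpen 𝒰)
    {X₀ : Gr k V} (hX₀ : X₀ ∈ 𝒰) {Y₀ : Submodule ℝ V}
    (hcontr : ∀ X ∈ 𝒰, IsContractingWithDirection Φ X.1 Y₀) :
    ∃ δ > 0, ∀ x ∈ X₀.1, ∀ y ∈ Y₀, ‖y‖ < δ * ‖x‖ → Φ (x + y) ≤ Φ x := by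
  obtain ⟨δ, hδ, hball⟩ :=
    (NormedAddGroup.nhds_zero_basis_norm_lt (E := X₀.1 →L[ℝ] V)).eventually_iff.1
      (Gr.eventually_range_subtype_add_mem h𝒰 hX₀)
  refine ⟨δ, hδ, fun x hx y hy hxy => ?_⟩
  have hx0 : (⟨x, hx⟩ : X₀.1) ≠ 0 := by
    rintro ⟨⟩
    simp only [norm_zero, mul_zero] at hxy
    exact (norm_nonneg y).not_gt hxy
  obtain ⟨T, hTx, hT⟩ := ContinuousLinearMap.exists_apply_eq_norm_eq (𝕜 := ℝ) hx0 y
  obtain ⟨X, hX𝒰, hX⟩ := hball (x := T) <| by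
    change ‖T‖ < δ
    rwa [hT, div_lt_iff₀ (norm_pos_iff.2 hx0)]
  refine (hcontr X hX𝒰).apply_add_le ?_ hy
  rw [hX]
  exact ⟨⟨x, hx⟩, by simp [hTx]⟩

theorem IsMinkowskiNorm.isCylinder_inter_add (hΦ : IsMinkowskiNorm Φ) {k : ℕ}
    {X Y : Submodule ℝ V} (hX : finrank ℝ X = k) (hXY : IsCompl X Y) :
    IsCylinder k (({v | Φ v ≤ 1} ∩ X) + (Y : Set V)) := by
  refine ⟨_, X, hX, inter_subset_right,
    hΦ.isCompact_unitBall.inter_right X.closed_of_finiteDimensional,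
    (hΦ.1.convex_le 1).inter X.convex, ⟨0, mem_interior.2 ?_⟩, Y, hXY, rfl⟩
  refine ⟨{x : X | Φ x < 1}, fun x (hx : Φ x < 1) => ⟨hx.le, x.2⟩,
    isOpen_lt (hΦ.1.continuous.comp continuous_subtype_val) continuous_const, ?_⟩
  simp [hΦ.1.map_zero]

theorem IsContractingWithDirection.coincideNear_inter_add {X Y : Submodule ℝ V}
    (h : IsContractingWithDirection Φ X Y) (hΦ : IsMinkowskiNorm Φ) {δ : ℝ} (hδ : 0 < δ)
    (hδΦ : ∀ x ∈ X, ∀ y ∈ Y, ‖y‖ < δ * ‖x‖ → Φ (x + y) ≤ Φ x) :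
    CoincideNear {v | Φ v ≤ 1} (({v | Φ v ≤ 1} ∩ X) + (Y : Set V)) X := by
  set P := X.projection Y h.1
  refine ⟨{v | Φ v < 1} ∪ {v | ‖v - P v‖ < δ * ‖P v‖}, ?_, fun x hx => ?_, ?_⟩
  · have hP : Continuous P := P.continuous_of_finiteDimensional
    exact (isOpen_lt hΦ.1.continuous continuous_const).union
      (isOpen_lt (continuous_id.sub hP).norm (continuous_const.mul hP.norm))
  · rcases eq_or_ne x 0 with rfl | hx0
    · simp [hΦ.1.map_zero]
    · right
      simpa [P, Submodule.projection_apply_of_mem_left h.1 hx] using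
        mul_pos hδ (norm_pos_iff.2 hx0)
  ext v
  refine ⟨fun ⟨hv, hvU⟩ => ⟨h.subset_inter_add 1 hv, hvU⟩, ?_⟩
  rintro ⟨⟨a, ⟨ha1, haX⟩, b, hbY, rfl⟩, hvU⟩
  refine ⟨?_, hvU⟩
  have hPab : P (a + b) = a := by
    simp [P, map_add, Submodule.projection_apply_of_mem_left h.1 haX,
      Submodule.projection_apply_of_mem_right h.1 hbY]
  rcases hvU with hlt | hnear
  · exact le_of_lt (show Φ (a + b) < 1 from hlt)
  · change ‖a + b - P (a + b)‖ < δ * ‖P (a + b)‖ at hnear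
    rw [hPab, add_sub_cancel_left] at hnear
    exact (hδΦ a haX b hbY hnear).trans ha1

end Cylinder

theorem same_cylinder_general
    {V : Type*} [NormedAddCommGroup V] [NormedSpace ℝ V] [FiniteDimensional ℝ V]
    (k : ℕ)
    (Φ : V → ℝ) (hΦ : IsMinkowskiNorm Φ) (B : Set V) (hB : B = {v | Φ v ≤ 1})
    (𝒰 : Set (Gr k V)) (h𝒰open : IsOpen 𝒰) (X₀ : Gr k V) (hX₀ : X₀ ∈ 𝒰)
    (Y₀ : Submodule ℝ V)
    (hcontr : ∀ X ∈ 𝒰, IsContractingWithDirection Φ X.1 Y₀) :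
    IsLocallyCylindricalNear k B X₀.1 := by
  subst hB
  obtain ⟨δ, hδ, hδΦ⟩ := exists_pos_forall_apply_add_le h𝒰open hX₀ hcontr
  have hX₀Y₀ := hcontr X₀ hX₀
  exact ⟨_, hΦ.isCylinder_inter_add X₀.2 hX₀Y₀.1, hX₀Y₀.coincideNear_inter_add hΦ hδ hδΦ⟩

/-- **Same contracting direction gives a local cylinder.** If all subspaces from an open
set `𝒰 ∋ X₀` are `Φ`-contracting with one and the same contracting direction `Y₀`,
then the unit ball `B` is locally cylindrical near `X₀`. -/
theorem same_cylinder
    {V : Type*} [NormedAddCommGroup V] [NormedSpace ℝ V] [FiniteDimensional ℝ V]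
    (n k : ℕ) (hn : Module.finrank ℝ V = n)
    (Φ : V → ℝ) (hΦ : IsMinkowskiNorm Φ) (B : Set V) (hB : B = {v | Φ v ≤ 1})
    (𝒰 : Set (Gr k V)) (h𝒰open : IsOpen 𝒰) (X₀ : Gr k V) (hX₀ : X₀ ∈ 𝒰)
    (Y₀ : Submodule ℝ V) (hY₀ : Module.finrank ℝ Y₀ = n - k)
    (hcontr : ∀ X ∈ 𝒰, IsContractingWithDirection Φ X.1 Y₀) :
    IsLocallyCylindricalNear k B X₀.1 :=
  same_cylinder_general k Φ hΦ B hB 𝒰 h𝒰open X₀ hX₀ Y₀ hcontr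
end

section
/- Let Φ be a Minkowski norm on an n-dimensional real vector space V. Let X₁, X₂ be two distinct hyperplanes ((n−1)-dimensional linear subspaces) of V and L₁, L₂ two distinct lines (1-dimensional linear subspaces) of V. Suppose X₁ is Φ-contracting with contracting direction L₁ and X₂ is Φ-contracting with contracting direction L₂. Then the (n−2)-dimensional subspace X₁ ∩ X₂ is Φ-contracting. -/
open Module Set Pointwise

/-!
Let `Pᵢ` be the projection onto `Xᵢ` along `Lᵢ`. Write `P₁ x = x - μ(x) e` with `ker μ = X₁`,
`e ∈ L₁`, and put `f = P₂ e`, which is nonzero because `L₁ ≠ L₂`. On `X₂` the nonexpanding map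
`P₂ P₁` is `x ↦ x - μ(x) f`: it fixes `X₁ ∩ X₂` and has `f` as an eigenvector with eigenvalue
`r = 1 - μ(f)`.
Positivity of `Φ` rules out the shear case `r = 1`, and `Φ(r² f) ≤ Φ(f)` gives `|r| ≤ 1`.
Averaging with the identity moves the eigenvalue into `[0, 1)`, so the iterates converge to the
projection of `X₂` onto `X₁ ∩ X₂` along `f`, which is therefore nonexpanding as well; composed with
`P₂ P₁` it is the required projector of `V` onto `X₁ ∩ X₂`.
-/

namespace IsMinkowskiNorm

variable {E : Type*} [AddCommGroup E] [Module ℝ E] {Φ : E → ℝ}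

theorem map_smul_of_nonneg (hΦ : IsMinkowskiNorm Φ) {c : ℝ} (hc : 0 ≤ c) (v : E) :
    Φ (c • v) = c * Φ v :=
  hΦ.1.2.1 c v hc

theorem map_add_le (hΦ : IsMinkowskiNorm Φ) (v w : E) : Φ (v + w) ≤ Φ v + Φ w :=
  hΦ.1.2.2 v w

theorem pos (hΦ : IsMinkowskiNorm Φ) {v : E} (hv : v ≠ 0) : 0 < Φ v :=
  hΦ.2 v hv

theorem comp {F : Type*} [AddCommGroup F] [Module ℝ F] (hΦ : IsMinkowskiNorm Φ)
    (g : F →ₗ[ℝ] E) (hg : Function.Injective g) : IsMinkowskiNorm (Φ ∘ g) :=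
  ⟨⟨fun v => hΦ.1.1 (g v), fun c v hc => by simp [hΦ.map_smul_of_nonneg hc],
    fun v w => by simpa using hΦ.map_add_le (g v) (g w)⟩,
    fun v hv => hΦ.pos ((map_ne_zero_iff g hg).mpr hv)⟩

theorem eq_zero_of_forall_natCast_smul_le (hΦ : IsMinkowskiNorm Φ) {x w : E} {C : ℝ}
    (h : ∀ k : ℕ, Φ (x + (k : ℝ) • w) ≤ C) : w = 0 := by
  by_contra hw
  have hbound (k : ℕ) : k * Φ w ≤ C + Φ (-x) := by
    rw [← hΦ.map_smul_of_nonneg k.cast_nonneg]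
    calc Φ ((k : ℝ) • w) = Φ ((x + (k : ℝ) • w) + -x) := by congr 1; abel
      _ ≤ Φ (x + (k : ℝ) • w) + Φ (-x) := hΦ.map_add_le _ _
      _ ≤ C + Φ (-x) := by linarith [h k]
  obtain ⟨k, hk⟩ := exists_nat_gt ((C + Φ (-x)) / Φ w)
  rw [div_lt_iff₀ (hΦ.pos hw)] at hk
  linarith [hbound k]

variable {μ : E →ₗ[ℝ] ℝ} {f : E}

theorem apply_ne_zero_of_forall_sub_smul_le (hΦ : IsMinkowskiNorm Φ) (hμ : μ ≠ 0)
    (hf : f ≠ 0) (hS : ∀ x, Φ (x - μ x • f) ≤ Φ x) : μ f ≠ 0 := by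
  intro hμf
  obtain ⟨x, hx⟩ : ∃ x, μ x ≠ 0 := by by_contra! h; exact hμ (LinearMap.ext h)
  -- with `μ f = 0` the map is a shear, whose iterates `x - k μ(x) f` escape to infinity
  have hshear : Antitone fun k : ℕ => Φ (x + (k : ℝ) • -(μ x • f)) := by
    refine antitone_nat_of_succ_le fun k => ?_
    refine (congrArg Φ ?_).trans_le (hS _)
    simp only [map_add, map_smul, map_neg, hμf, smul_eq_mul, mul_zero, neg_zero, add_zero]
    push_cast
    module
  have := hΦ.eq_zero_of_forall_natCast_smul_le fun k => hshear (Nat.zero_le k)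
  exact hf (smul_eq_zero.mp (neg_eq_zero.mp this) |>.resolve_left hx)

theorem apply_mem_Icc_of_forall_sub_smul_le (hΦ : IsMinkowskiNorm Φ) (hf : f ≠ 0)
    (hS : ∀ x, Φ (x - μ x • f) ≤ Φ x) : μ f ∈ Set.Icc 0 2 := by
  set r := 1 - μ f
  have hSf : f - μ f • f = r • f := by module
  have hSSf : r • f - μ (r • f) • f = (r ^ 2) • f := by
    rw [map_smul, smul_eq_mul, sq]; module
  have hr : r ^ 2 * Φ f ≤ 1 * Φ f := by
    rw [← hΦ.map_smul_of_nonneg (sq_nonneg r), one_mul, ← hSSf]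
    exact (hS _).trans (hSf ▸ hS f)
  have := le_of_mul_le_mul_right hr (hΦ.pos hf)
  constructor <;> nlinarith

theorem forall_sub_div_smul_le (hΦ : IsMinkowskiNorm Φ) {c : ℝ}
    (hR : ∀ x, Φ (x - (c * μ x) • f) ≤ Φ x) (h0 : 0 < c * μ f) (h1 : c * μ f ≤ 1) (x : E) :
    Φ (x - (μ x / μ f) • f) ≤ Φ x := by
  have hμf : μ f ≠ 0 := by rintro h; simp [h] at h0
  set s := 1 - c * μ f
  set t := μ x / μ f
  set q := x - t • f
  have hq : μ q = 0 := by simp [q, t, hμf]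
  -- the iterates of the contraction converge to the projection `q` geometrically
  have hiter : Antitone fun k : ℕ => Φ (q + (s ^ k * t) • f) := by
    refine antitone_nat_of_succ_le fun k => (congrArg Φ ?_).trans_le (hR _)
    simp only [map_add, map_smul, hq, smul_eq_mul, zero_add, s]
    module
  have hle (k : ℕ) : Φ q ≤ Φ x + s ^ k * Φ (-(t • f)) := by
    have hx : Φ (q + (s ^ k * t) • f) ≤ Φ x := by
      simpa [q] using hiter (Nat.zero_le k)
    calc Φ q = Φ ((q + (s ^ k * t) • f) + s ^ k • -(t • f)) := by congr 1; module
      _ ≤ Φ (q + (s ^ k * t) • f) + s ^ k * Φ (-(t • f)) := by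
        rw [← hΦ.map_smul_of_nonneg (pow_nonneg (by linarith) k)]
        exact hΦ.map_add_le _ _
      _ ≤ Φ x + s ^ k * Φ (-(t • f)) := by linarith
  have hlim : Filter.Tendsto (fun k : ℕ => Φ x + s ^ k * Φ (-(t • f))) Filter.atTop
      (nhds (Φ x)) := by
    simpa using tendsto_const_nhds.add
      ((tendsto_pow_atTop_nhds_zero_of_lt_one (by linarith) (by linarith)).mul_const
        (Φ (-(t • f))))
  exact ge_of_tendsto' hlim hle

theorem apply_ne_zero_and_forall_sub_div_smul_le (hΦ : IsMinkowskiNorm Φ) (hμ : μ ≠ 0)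
    (hf : f ≠ 0) (hS : ∀ x, Φ (x - μ x • f) ≤ Φ x) :
    μ f ≠ 0 ∧ ∀ x, Φ (x - (μ x / μ f) • f) ≤ Φ x := by
  have hμf := hΦ.apply_ne_zero_of_forall_sub_smul_le hμ hf hS
  obtain ⟨h0, h2⟩ := hΦ.apply_mem_Icc_of_forall_sub_smul_le hf hS
  -- averaging with the identity moves the eigenvalue `1 - μ f ∈ [-1, 1)` into `[0, 1)`
  have hR (y : E) : Φ (y - (2⁻¹ * μ y) • f) ≤ Φ y := by
    calc Φ (y - (2⁻¹ * μ y) • f) = Φ ((2⁻¹ : ℝ) • y + (2⁻¹ : ℝ) • (y - μ y • f)) := by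
          congr 1; module
      _ ≤ 2⁻¹ * Φ y + 2⁻¹ * Φ (y - μ y • f) := by
          rw [← hΦ.map_smul_of_nonneg (by norm_num), ← hΦ.map_smul_of_nonneg (by norm_num)]
          exact hΦ.map_add_le _ _
      _ ≤ Φ y := by linarith [hS y]
  exact ⟨hμf, hΦ.forall_sub_div_smul_le hR (mul_pos (by norm_num) (h0.lt_of_ne' hμf))
    (by linarith)⟩

end IsMinkowskiNorm

theorem exists_projection_eq_sub_smul {K V : Type*} [Field K] [AddCommGroup V] [Module K V]
    {X L : Submodule K V} (hc : IsCompl X L) (hL : finrank K L = 1) :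
    ∃ (μ : V →ₗ[K] K) (e : V), e ∈ L ∧ e ≠ 0 ∧ LinearMap.ker μ = X ∧
      ∀ v, X.projection L hc v = v - μ v • e := by
  have : Module.Finite K L := Module.finite_of_finrank_pos (by omega)
  let g : L ≃ₗ[K] K := LinearEquiv.ofFinrankEq L K (by simp [hL])
  have hg (y : L) : (y : V) = g y • (g.symm 1 : V) := by
    rw [← Submodule.coe_smul, ← map_smul, smul_eq_mul, mul_one, LinearEquiv.symm_apply_apply]
  refine ⟨g.toLinearMap ∘ₗ L.projectionOnto X hc.symm, g.symm 1, (g.symm 1).2, by simp, ?_,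
    fun v => ?_⟩
  · ext v
    simp
  · rw [Submodule.projection_eq_self_sub_projection hc.symm v, Submodule.projection_apply, hg]
    rfl

section Projections

open Submodule

variable {V : Type*} [AddCommGroup V] [Module ℝ V]

theorem isContracting_of_forall {Φ : V → ℝ} {X : Submodule ℝ V} (P : V →ₗ[ℝ] V)
    (hmem : ∀ v, P v ∈ X) (hfix : ∀ x ∈ X, P x = x) (hle : ∀ v, Φ (P v) ≤ Φ v) :
    IsContracting Φ X :=
  ⟨P, LinearMap.ext fun v => hfix _ (hmem v),
    le_antisymm (LinearMap.range_le_iff_comap.mpr (eq_top_iff.mpr fun v _ => hmem v))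
      fun x hx => ⟨x, hfix x hx⟩, hle⟩

theorem isContracting_ker_inf {Φ : V → ℝ} {W : Submodule ℝ V} {μ : V →ₗ[ℝ] ℝ} {f : V}
    (T : V →ₗ[ℝ] V) (hTW : ∀ v, T v ∈ W) (hTfix : ∀ x ∈ LinearMap.ker μ ⊓ W, T x = x)
    (hT : ∀ v, Φ (T v) ≤ Φ v) (hfW : f ∈ W) (hμf : μ f ≠ 0)
    (hQ : ∀ x ∈ W, Φ (x - (μ x / μ f) • f) ≤ Φ x) :
    IsContracting Φ (LinearMap.ker μ ⊓ W) := by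
  let Q : V →ₗ[ℝ] V := LinearMap.id - (μ f)⁻¹ • μ.smulRight f
  have hQ_apply (v : V) : Q v = v - (μ v / μ f) • f := by
    simp [Q, smul_smul, div_eq_inv_mul]
  refine isContracting_of_forall (Q ∘ₗ T) (fun v => ⟨?_, ?_⟩) (fun x hx => ?_) (fun v => ?_)
  · simp [hQ_apply, hμf]
  · simpa [hQ_apply] using W.sub_mem (hTW v) (W.smul_mem _ hfW)
  · simp [hQ_apply, hTfix x hx, LinearMap.mem_ker.mp hx.1]
  · simpa [hQ_apply] using (hQ _ (hTW v)).trans (hT v)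

theorem isContracting_inf_of_isCompl {Φ : V → ℝ} (hΦ : IsMinkowskiNorm Φ)
    {X₁ X₂ L₁ L₂ : Submodule ℝ V} (hc₁ : IsCompl X₁ L₁) (hc₂ : IsCompl X₂ L₂)
    (hL₁ : finrank ℝ L₁ = 1) (hL₂ : finrank ℝ L₂ = 1) (hLne : L₁ ≠ L₂) (hX : ¬X₂ ≤ X₁)
    (hP₁ : ∀ v, Φ (X₁.projection L₁ hc₁ v) ≤ Φ v) (hP₂ : ∀ v, Φ (X₂.projection L₂ hc₂ v) ≤ Φ v) :
    IsContracting Φ (X₁ ⊓ X₂) := by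
  obtain ⟨μ, e, heL₁, he, hker, hP₁e⟩ := exists_projection_eq_sub_smul hc₁ hL₁
  set f := X₂.projection L₂ hc₂ e
  have hfX₂ : f ∈ X₂ := projection_apply_mem hc₂ e
  have hf : f ≠ 0 := fun h => hLne <| by
    rw [eq_span_singleton_of_mem_of_finrank_eq_one hL₁ heL₁ he,
      eq_span_singleton_of_mem_of_finrank_eq_one hL₂ ((projection_apply_eq_zero_iff hc₂).mp h) he]
  have hT (x : V) (hx : x ∈ X₂) :
      X₂.projection L₂ hc₂ (X₁.projection L₁ hc₁ x) = x - μ x • f := by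
    rw [hP₁e, map_sub, map_smul, projection_apply_of_mem_left hc₂ hx]
  have hμ : μ ∘ₗ X₂.subtype ≠ 0 := by
    obtain ⟨x, hx₂, hx₁⟩ := SetLike.not_le_iff_exists.mp (hker ▸ hX)
    exact fun h => hx₁ (LinearMap.congr_fun h ⟨x, hx₂⟩)
  obtain ⟨hμf, hQ⟩ :=
    (hΦ.comp X₂.subtype X₂.injective_subtype).apply_ne_zero_and_forall_sub_div_smul_le
      hμ (f := ⟨f, hfX₂⟩) (by simpa using hf) fun x => by
        simpa [← hT x x.2] using (hP₂ _).trans (hP₁ x)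
  rw [← hker]
  refine isContracting_ker_inf (X₂.projection L₂ hc₂ ∘ₗ X₁.projection L₁ hc₁)
    (fun v => projection_apply_mem hc₂ _) (fun x hx => ?_) (fun v => (hP₂ _).trans (hP₁ v))
    hfX₂ hμf fun x hx => by simpa using hQ ⟨x, hx⟩
  simp [projection_apply_of_mem_left _ (hker ▸ hx.1 : x ∈ X₁),
    projection_apply_of_mem_left _ hx.2]

end Projections

section Hyperplanes

variable {K V : Type*} [Field K] [AddCommGroup V] [Module K V] [FiniteDimensional K V]

theorem Submodule.not_le_of_ne_of_finrank_eq {X₁ X₂ : Submodule K V} (hne : X₁ ≠ X₂)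
    (h : finrank K X₂ = finrank K X₁) : ¬X₂ ≤ X₁ :=
  fun hle => hne (Submodule.eq_of_le_of_finrank_eq hle h).symm

theorem finrank_inf_eq_sub_two {n : ℕ} (hV : finrank K V = n) {X₁ X₂ : Submodule K V}
    (hX₁ : finrank K X₁ = n - 1) (hX₂ : finrank K X₂ = n - 1) (hne : X₁ ≠ X₂) :
    finrank K ↥(X₁ ⊓ X₂) = n - 2 := by
  have hnle := Submodule.not_le_of_ne_of_finrank_eq hne (hX₂.trans hX₁.symm)
  have hlt : finrank K X₁ < finrank K ↥(X₁ ⊔ X₂) :=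
    Submodule.finrank_lt_finrank_of_lt (left_lt_sup.mpr hnle)
  have hle : finrank K ↥(X₁ ⊔ X₂) ≤ n := hV ▸ Submodule.finrank_le _
  have := Submodule.finrank_sup_add_finrank_inf_eq X₁ X₂
  omega

end Hyperplanes

/-- **Dimension reduction.** If two distinct hyperplanes are `Φ`-contracting with two
distinct lines as contracting directions, then their intersection, an `(n-2)`-dimensional
subspace, is `Φ`-contracting. -/
theorem dimension_reduction
    {V : Type*} [NormedAddCommGroup V] [NormedSpace ℝ V] [FiniteDimensional ℝ V]
    (n : ℕ) (hV : Module.finrank ℝ V = n)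
    (Φ : V → ℝ) (hΦ : IsMinkowskiNorm Φ)
    (X₁ X₂ L₁ L₂ : Submodule ℝ V)
    (hX₁ : Module.finrank ℝ X₁ = n - 1) (hX₂ : Module.finrank ℝ X₂ = n - 1)
    (hXne : X₁ ≠ X₂)
    (hL₁ : Module.finrank ℝ L₁ = 1) (hL₂ : Module.finrank ℝ L₂ = 1)
    (hLne : L₁ ≠ L₂)
    (h₁ : IsContractingWithDirection Φ X₁ L₁)
    (h₂ : IsContractingWithDirection Φ X₂ L₂) :
    Module.finrank ℝ ↥(X₁ ⊓ X₂) = n - 2 ∧ IsContracting Φ (X₁ ⊓ X₂) := by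
  obtain ⟨hc₁, hP₁⟩ := h₁
  obtain ⟨hc₂, hP₂⟩ := h₂
  exact ⟨finrank_inf_eq_sub_two hV hX₁ hX₂ hXne,
    isContracting_inf_of_isCompl hΦ hc₁ hc₂ hL₁ hL₂ hLne
      (Submodule.not_le_of_ne_of_finrank_eq hXne (hX₂.trans hX₁.symm)) hP₁ hP₂⟩
end
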